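/- arXiv:math/0609146 — 5 statements merged into one kernel-verified Lean document; each statement's English description precedes it below -/
import Mathlib

section
/- Let K be a commutative ring, G a group, and n ≥ 0. If G is of type FP_n over K (i.e. the left KG-module K, with action via the augmentation, is of type FP_n), then G is of type bi-FP_n over K: there is an exact sequence 0 ← KG ← F_0 ← F_1 ← ⋯ ← F_n of (KG,KG)-bimodules with each F_i finitely generated free, where KG is a bimodule via left and right multiplication. -/
open Function LinearMap TensorProduct MulOpposite

/-- A left `R`-module `M` is of type `FP n`: there is an exact sequence
`0 ← M ← P₀ ← P₁ ← ⋯ ← Pₙ` with each `Pᵢ` a finitely generated free left `R`-module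
(wlog `Pᵢ = Fin rᵢ → R`). -/
def IsFP (R : Type*) [Ring R] (M : Type*) [AddCommGroup M] [Module R M] (n : ℕ) : Prop :=
  ∃ (r : ℕ → ℕ) (d : ∀ i : ℕ, (Fin (r (i + 1)) → R) →ₗ[R] (Fin (r i) → R))
    (e : (Fin (r 0) → R) →ₗ[R] M),
    Function.Surjective e ∧
    (0 < n → LinearMap.ker e = LinearMap.range (d 0)) ∧
    ∀ i : ℕ, i + 1 < n → LinearMap.ker (d i) = LinearMap.range (d (i + 1))

/-- Left `FP n` of a ring `R` augmented by `ε : R →+* K`: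
`K` is a left `R`-module via `ε`, required to be of type `FP n`. -/
def LeftFP {K : Type*} [CommRing K] (R : Type*) [Ring R] (ε : R →+* K) (n : ℕ) : Prop :=
  letI : Module R K := Module.compHom K ε
  IsFP R K n

/-- Right `FP n`: right `R`-modules are left `Rᵐᵒᵖ`-modules. -/
def RightFP {K : Type*} [CommRing K] (R : Type*) [Ring R] (ε : R →+* K) (n : ℕ) : Prop :=
  LeftFP Rᵐᵒᵖ (ε.fromOpposite fun _ _ => mul_comm _ _) n

/-- Left multiplication by `a` on the first factor of `A ⊗[K] A`
(the free `(A,A)`-bimodule of rank one). -/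
noncomputable def lmulT (K A : Type*) [CommRing K] [Ring A] [Algebra K A] (a : A) :
    (A ⊗[K] A) →ₗ[K] A ⊗[K] A := LinearMap.rTensor A (LinearMap.mulLeft K a)

/-- Right multiplication by `b` on the second factor of `A ⊗[K] A`. -/
noncomputable def rmulT (K A : Type*) [CommRing K] [Ring A] [Algebra K A] (b : A) :
    (A ⊗[K] A) →ₗ[K] A ⊗[K] A := LinearMap.lTensor A (LinearMap.mulRight K b)

/-- An `(A,A)`-bimodule, presented as a `K`-module `M` together with commuting left/right
multiplication operators `lact, ract`, is of type `bi-FP n`: there is an exact sequence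
`0 ← M ← F₀ ← ⋯ ← Fₙ` of `(A,A)`-bimodules where each `Fᵢ` is a finitely generated free
bimodule (wlog `Fᵢ = Fin rᵢ → A ⊗[K] A`) and the maps are bimodule maps, i.e. `K`-linear maps
commuting with the two-sided `A`-actions. -/
def IsBiFP (K A : Type*) [CommRing K] [Ring A] [Algebra K A]
    (M : Type*) [AddCommGroup M] [Module K M]
    (lact ract : A → M →ₗ[K] M) (n : ℕ) : Prop :=
  ∃ (r : ℕ → ℕ)
    (d : ∀ i : ℕ, (Fin (r (i + 1)) → A ⊗[K] A) →ₗ[K] (Fin (r i) → A ⊗[K] A))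
    (e : (Fin (r 0) → A ⊗[K] A) →ₗ[K] M),
    (∀ (i : ℕ) (a : A), d i ∘ₗ (lmulT K A a).compLeft (Fin (r (i + 1))) =
        (lmulT K A a).compLeft (Fin (r i)) ∘ₗ d i) ∧
    (∀ (i : ℕ) (b : A), d i ∘ₗ (rmulT K A b).compLeft (Fin (r (i + 1))) =
        (rmulT K A b).compLeft (Fin (r i)) ∘ₗ d i) ∧
    (∀ a : A, e ∘ₗ (lmulT K A a).compLeft (Fin (r 0)) = lact a ∘ₗ e) ∧
    (∀ b : A, e ∘ₗ (rmulT K A b).compLeft (Fin (r 0)) = ract b ∘ₗ e) ∧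
    Function.Surjective e ∧
    (0 < n → LinearMap.ker e = LinearMap.range (d 0)) ∧
    ∀ i : ℕ, i + 1 < n → LinearMap.ker (d i) = LinearMap.range (d (i + 1))

/-- `A` is of type `bi-FP n`: the bimodule `A` (by left and right multiplication)
admits a resolution by finitely generated free bimodules. -/
def BiFP (K A : Type*) [CommRing K] [Ring A] [Algebra K A] (n : ℕ) : Prop :=
  IsBiFP K A A (fun a => LinearMap.mulLeft K a) (fun b => LinearMap.mulRight K b) n

/-- `A` (augmented by `ε`) is of type weak `bi-FP n`: the bimodule `K`
(with action `a·k·a' = ε(a) k ε(a')`) admits a resolution by f.g. free bimodules. -/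
def WeakBiFP (K A : Type*) [CommRing K] [Ring A] [Algebra K A] (ε : A →ₐ[K] K) (n : ℕ) :
    Prop :=
  IsBiFP K A K (fun a => ε a • LinearMap.id) (fun b => ε b • LinearMap.id) n

/-- The standard augmentation of a monoid algebra, `b ↦ 1` for `b ∈ B`. -/
noncomputable def aug (K B : Type*) [CommRing K] [Monoid B] : MonoidAlgebra K B →ₐ[K] K :=
  MonoidAlgebra.lift K K B 1

/-!
Tensoring a free resolution `P_• → K` of the trivial `KG`-module over `K` with `KG` gives an exact
complex `KG ⊗_K P_• → KG ⊗_K K = KG`, because `KG` is `K`-free, hence flat. Let `G` act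
diagonally on the left of `KG ⊗_K P_i` and `KG` act on the right through the first factor;
for `P_i = KG^r` the twist `u ⊗ h ↦ h ⊗ h⁻¹u` (`h ∈ G`) identifies this bimodule with the
free bimodule `(KG ⊗_K KG)^r`, and `id ⊗ d_i`, `id ⊗ ε` become bimodule maps. Equivariance
for the left action is checked on group elements, where it is diagonal, and extends linearly.
-/

open MonoidAlgebra

theorem LinearEquiv.comp_symm_comp_eq_of_comp_eq {R M M' N : Type*} [Semiring R]
    [AddCommMonoid M] [AddCommMonoid M'] [AddCommMonoid N] [Module R M] [Module R M'] [Module R N]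
    {ψ : M ≃ₗ[R] M'} {f : M →ₗ[R] N} {T : Module.End R M} {S : Module.End R M'}
    {S' : Module.End R N} (hψ : ψ ∘ₗ T = S ∘ₗ ψ) (hf : f ∘ₗ T = S' ∘ₗ f) :
    (f ∘ₗ ψ.symm) ∘ₗ S = S' ∘ₗ f ∘ₗ ψ.symm := by
  ext x
  obtain ⟨y, rfl⟩ := ψ.surjective x
  have hT : ψ (T y) = S (ψ y) := congr($hψ y)
  simpa [← hT] using congr($hf y)

section FreeBimodule

variable (K A : Type*) [CommRing K] [Ring A] [Algebra K A]

noncomputable def lmulTCompLeft (ι : Type*) : A →ₗ[K] Module.End K (ι → A ⊗[K] A) where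
  toFun a := (lmulT K A a).compLeft ι
  map_add' a b := by
    ext x i
    simp [lmulT, show mulLeft K (a + b) = mulLeft K a + mulLeft K b from map_add (mul K A) a b]
  map_smul' c a := by
    ext x i
    simp [lmulT, show mulLeft K (c • a) = c • mulLeft K a from map_smul (mul K A) c a]

variable {K A}

theorem mulLeft_compLeft_apply {ι : Type*} (a : A) (m : ι → A) :
    (mulLeft K a).compLeft ι m = a • m :=
  rfl

theorem rid_comp_lTensor_comp_rTensor_mulRight {P : Type*} [AddCommMonoid P] [Module K P]
    (e : P →ₗ[K] K) (b : A) :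
    (TensorProduct.rid K A ∘ₗ lTensor A e) ∘ₗ rTensor P (mulRight K b) =
      mulRight K b ∘ₗ TensorProduct.rid K A ∘ₗ lTensor A e := by
  refine TensorProduct.ext' fun u m => ?_
  simp

end FreeBimodule

namespace MonoidAlgebra

section Extension

variable {K G M N : Type*} [CommSemiring K] [Monoid G] [AddCommMonoid M] [Module K M]
  [AddCommMonoid N] [Module K N]

theorem comp_eq_comp_of_forall_of (L : K[G] →ₗ[K] Module.End K M)
    (L' : K[G] →ₗ[K] Module.End K N) {f : M →ₗ[K] N}
    (h : ∀ g, f ∘ₗ L (of K G g) = L' (of K G g) ∘ₗ f) (a : K[G]) :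
    f ∘ₗ L a = L' a ∘ₗ f := by
  induction a using MonoidAlgebra.induction_on with
  | of g => exact h g
  | add a b ha hb => rw [map_add, map_add, comp_add, add_comp, ha, hb]
  | smul c a ha => rw [map_smul, map_smul, comp_smul, smul_comp, ha]

end Extension

variable (K G : Type*) [CommRing K] [Group G]

noncomputable def tensorTwist : K[G] ⊗[K] K[G] ≃ₗ[K] K[G] ⊗[K] K[G] :=
  let b := (basis G K).tensorProduct (basis G K)
  b.equiv b
    { toFun p := (p.2, p.2⁻¹ * p.1)
      invFun p := (p.1 * p.2, p.1)
      left_inv := by rintro ⟨g, h⟩; simp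
      right_inv := by rintro ⟨g, h⟩; simp }

variable {K G}

theorem tensorTwist_single_tmul_single (g h : G) :
    tensorTwist K G (single g 1 ⊗ₜ single h 1) = single h 1 ⊗ₜ single (h⁻¹ * g) (1 : K) := by
  have hb : single g 1 ⊗ₜ single h 1 = (basis G K).tensorProduct (basis G K) (g, h) := by simp
  rw [hb, tensorTwist, Module.Basis.equiv_apply]
  simp

theorem tensorTwist_tmul_single (u : K[G]) (h : G) :
    tensorTwist K G (u ⊗ₜ single h 1) = single h 1 ⊗ₜ (single h⁻¹ 1 * u) := by
  induction u using MonoidAlgebra.induction_on with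
  | of g => simp [tensorTwist_single_tmul_single]
  | add u v hu hv => rw [add_tmul, map_add, hu, hv, mul_add, tmul_add]
  | smul c u hu => rw [← smul_tmul', map_smul, hu, mul_smul_comm, tmul_smul]

theorem tensorTwist_comp_map_mulLeft_of (g : G) :
    tensorTwist K G ∘ₗ TensorProduct.map (mulLeft K (of K G g)) (mulLeft K (of K G g)) =
      lmulT K K[G] (of K G g) ∘ₗ (tensorTwist K G).toLinearMap := by
  ext u h
  simp [tensorTwist_single_tmul_single, lmulT, mul_assoc]

theorem tensorTwist_comp_rTensor_mulRight (b : K[G]) :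
    tensorTwist K G ∘ₗ rTensor K[G] (mulRight K b) =
      rmulT K K[G] b ∘ₗ (tensorTwist K G).toLinearMap := by
  ext u h
  simp [tensorTwist_tmul_single, rmulT, ← mul_assoc, single_mul_single]

variable (ι : Type*)

variable (K G) in
noncomputable def piTensorTwist [Fintype ι] [DecidableEq ι] :
    K[G] ⊗[K] (ι → K[G]) ≃ₗ[K] (ι → K[G] ⊗[K] K[G]) :=
  piRight K K K[G] (fun _ : ι => K[G]) ≪≫ₗ LinearEquiv.piCongrRight fun _ => tensorTwist K G

noncomputable def diagMul (g : G) : K[G] ⊗[K] (ι → K[G]) →ₗ[K] K[G] ⊗[K] (ι → K[G]) :=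
  TensorProduct.map (mulLeft K (of K G g)) ((mulLeft K (of K G g)).compLeft ι)

theorem piTensorTwist_comp_diagMul [Fintype ι] [DecidableEq ι] (g : G) :
    piTensorTwist K G ι ∘ₗ diagMul ι g =
      (lmulT K K[G] (of K G g)).compLeft ι ∘ₗ (piTensorTwist K G ι).toLinearMap := by
  refine TensorProduct.ext' fun u m => funext fun j => ?_
  simpa [piTensorTwist, diagMul] using congr($(tensorTwist_comp_map_mulLeft_of g) (u ⊗ₜ m j))

theorem piTensorTwist_comp_rTensor_mulRight [Fintype ι] [DecidableEq ι] (b : K[G]) :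
    piTensorTwist K G ι ∘ₗ rTensor (ι → K[G]) (mulRight K b) =
      (rmulT K K[G] b).compLeft ι ∘ₗ (piTensorTwist K G ι).toLinearMap := by
  refine TensorProduct.ext' fun u m => funext fun j => ?_
  simpa [piTensorTwist] using congr($(tensorTwist_comp_rTensor_mulRight b) (u ⊗ₜ m j))

variable {ι} {κ : Type*}

theorem lTensor_comp_diagMul (d : (ι → K[G]) →ₗ[K[G]] (κ → K[G])) (g : G) :
    lTensor K[G] (d.restrictScalars K) ∘ₗ diagMul ι g =
      diagMul κ g ∘ₗ lTensor K[G] (d.restrictScalars K) := by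
  refine TensorProduct.ext' fun u m => ?_
  simp [diagMul, mulLeft_compLeft_apply]

theorem rid_comp_lTensor_comp_diagMul {e : (ι → K[G]) →ₗ[K] K}
    (he : ∀ g m, e (of K G g • m) = e m) (g : G) :
    (TensorProduct.rid K K[G] ∘ₗ lTensor K[G] e) ∘ₗ diagMul ι g =
      mulLeft K (of K G g) ∘ₗ TensorProduct.rid K K[G] ∘ₗ lTensor K[G] e := by
  refine TensorProduct.ext' fun u m => ?_
  simp only [diagMul, coe_comp, LinearEquiv.coe_coe, Function.comp_apply, map_tmul, lTensor_tmul,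
    TensorProduct.rid_tmul, mulLeft_apply, mulLeft_compLeft_apply, he, mul_smul_comm]

variable [Fintype ι] [DecidableEq ι] [Fintype κ] [DecidableEq κ]

noncomputable def bimoduleMap (d : (ι → K[G]) →ₗ[K[G]] (κ → K[G])) :
    (ι → K[G] ⊗[K] K[G]) →ₗ[K] (κ → K[G] ⊗[K] K[G]) :=
  (piTensorTwist K G κ ∘ₗ lTensor K[G] (d.restrictScalars K)) ∘ₗ (piTensorTwist K G ι).symm

noncomputable def bimoduleAugmentation (e : (ι → K[G]) →ₗ[K] K) :
    (ι → K[G] ⊗[K] K[G]) →ₗ[K] K[G] :=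
  (TensorProduct.rid K K[G] ∘ₗ lTensor K[G] e) ∘ₗ (piTensorTwist K G ι).symm

theorem bimoduleMap_comp_lmulT (d : (ι → K[G]) →ₗ[K[G]] (κ → K[G])) (a : K[G]) :
    bimoduleMap d ∘ₗ (lmulT K K[G] a).compLeft ι =
      (lmulT K K[G] a).compLeft κ ∘ₗ bimoduleMap d :=
  comp_eq_comp_of_forall_of (lmulTCompLeft K K[G] ι) (lmulTCompLeft K K[G] κ) (fun g =>
    LinearEquiv.comp_symm_comp_eq_of_comp_eq (piTensorTwist_comp_diagMul ι g) (by
      rw [LinearMap.comp_assoc, lTensor_comp_diagMul, ← LinearMap.comp_assoc,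
        piTensorTwist_comp_diagMul]
      rfl)) a

theorem bimoduleMap_comp_rmulT (d : (ι → K[G]) →ₗ[K[G]] (κ → K[G])) (b : K[G]) :
    bimoduleMap d ∘ₗ (rmulT K K[G] b).compLeft ι =
      (rmulT K K[G] b).compLeft κ ∘ₗ bimoduleMap d :=
  LinearEquiv.comp_symm_comp_eq_of_comp_eq (piTensorTwist_comp_rTensor_mulRight ι b) (by
    rw [LinearMap.comp_assoc, lTensor_comp_rTensor, ← rTensor_comp_lTensor,
      ← LinearMap.comp_assoc, piTensorTwist_comp_rTensor_mulRight]
    rfl)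

theorem bimoduleAugmentation_comp_lmulT {e : (ι → K[G]) →ₗ[K] K}
    (he : ∀ g m, e (of K G g • m) = e m) (a : K[G]) :
    bimoduleAugmentation e ∘ₗ (lmulT K K[G] a).compLeft ι =
      mulLeft K a ∘ₗ bimoduleAugmentation e :=
  comp_eq_comp_of_forall_of (lmulTCompLeft K K[G] ι) (mul K K[G]) (fun g =>
    LinearEquiv.comp_symm_comp_eq_of_comp_eq (piTensorTwist_comp_diagMul ι g)
      (rid_comp_lTensor_comp_diagMul he g)) a

theorem bimoduleAugmentation_comp_rmulT (e : (ι → K[G]) →ₗ[K] K) (b : K[G]) :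
    bimoduleAugmentation e ∘ₗ (rmulT K K[G] b).compLeft ι =
      mulRight K b ∘ₗ bimoduleAugmentation e :=
  LinearEquiv.comp_symm_comp_eq_of_comp_eq (piTensorTwist_comp_rTensor_mulRight ι b)
    (rid_comp_lTensor_comp_rTensor_mulRight e b)

theorem bimoduleMap_comp_piTensorTwist (d : (ι → K[G]) →ₗ[K[G]] (κ → K[G])) :
    bimoduleMap d ∘ₗ piTensorTwist K G ι =
      piTensorTwist K G κ ∘ₗ lTensor K[G] (d.restrictScalars K) := by
  ext x; simp [bimoduleMap]

theorem bimoduleAugmentation_comp_piTensorTwist (e : (ι → K[G]) →ₗ[K] K) :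
    bimoduleAugmentation e ∘ₗ piTensorTwist K G ι =
      TensorProduct.rid K K[G] ∘ₗ lTensor K[G] e := by
  ext x; simp [bimoduleAugmentation]

theorem exact_bimoduleMap {μ : Type*} [Fintype μ] [DecidableEq μ]
    {d₁ : (ι → K[G]) →ₗ[K[G]] (κ → K[G])} {d₀ : (κ → K[G]) →ₗ[K[G]] (μ → K[G])}
    (h : Exact d₁ d₀) : Exact (bimoduleMap d₁) (bimoduleMap d₀) :=
  Exact.of_ladder_linearEquiv_of_exact (bimoduleMap_comp_piTensorTwist d₁)
    (bimoduleMap_comp_piTensorTwist d₀) (Module.Flat.lTensor_exact K[G] h)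

theorem exact_bimoduleMap_bimoduleAugmentation {d : (ι → K[G]) →ₗ[K[G]] (κ → K[G])}
    {e : (κ → K[G]) →ₗ[K] K} (h : Exact d e) :
    Exact (bimoduleMap d) (bimoduleAugmentation e) :=
  Exact.of_ladder_linearEquiv_of_exact (bimoduleMap_comp_piTensorTwist d)
    (bimoduleAugmentation_comp_piTensorTwist e) (Module.Flat.lTensor_exact K[G] h)

theorem bimoduleAugmentation_surjective {e : (ι → K[G]) →ₗ[K] K} (h : Surjective e) :
    Surjective (bimoduleAugmentation e) :=
  (TensorProduct.rid K K[G]).surjective.comp (lTensor_surjective K[G] h) |>.comp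
    (piTensorTwist K G ι).symm.surjective

end MonoidAlgebra

theorem LeftFP.exists_resolution {K G : Type*} [CommRing K] [Monoid G] {n : ℕ}
    (h : LeftFP K[G] (aug K G).toRingHom n) :
    ∃ (r : ℕ → ℕ) (d : ∀ i, (Fin (r (i + 1)) → K[G]) →ₗ[K[G]] (Fin (r i) → K[G]))
      (e : (Fin (r 0) → K[G]) →ₗ[K] K),
      Surjective e ∧ (∀ g m, e (of K G g • m) = e m) ∧ (0 < n → Exact (d 0) e) ∧
        ∀ i, i + 1 < n → Exact (d (i + 1)) (d i) := by
  let : Module K[G] K := Module.compHom K (aug K G).toRingHom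
  have : IsScalarTower K K[G] K := ⟨fun c a x => by
    change aug K G (c • a) * x = c • (aug K G a * x)
    rw [map_smul, smul_mul_assoc]⟩
  obtain ⟨r, d, e, he, h₀, hsucc⟩ := h
  refine ⟨r, d, e.restrictScalars K, he, fun g m => ?_, fun hn => exact_iff.mpr (h₀ hn),
    fun i hi => exact_iff.mpr (hsucc i hi)⟩
  calc e (of K G g • m) = aug K G (of K G g) * e m := e.map_smul _ m
    _ = e m := by simp [aug]

/-- If a group `G` is of type `FP n` over `K` (the left `KG`-module `K` via
the augmentation is of type `FP n`), then `G` is of type bi-`FP n` over `K`. -/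
theorem group_leftFP_imp_biFP
    (K : Type*) [CommRing K] (G : Type*) [Group G] (n : ℕ)
    (h : LeftFP (MonoidAlgebra K G) (aug K G).toRingHom n) :
    BiFP K (MonoidAlgebra K G) n := by
  obtain ⟨r, d, e, he_surj, he_inv, h₀, hsucc⟩ := h.exists_resolution
  refine ⟨r, fun i => bimoduleMap (d i), bimoduleAugmentation e,
    fun i => bimoduleMap_comp_lmulT (d i), fun i => bimoduleMap_comp_rmulT (d i),
    bimoduleAugmentation_comp_lmulT he_inv, bimoduleAugmentation_comp_rmulT e,
    bimoduleAugmentation_surjective he_surj, fun hn => ?_, fun i hi => ?_⟩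
  · exact exact_iff.mp (exact_bimoduleMap_bimoduleAugmentation (h₀ hn))
  · exact exact_iff.mp (exact_bimoduleMap (hsucc i hi))
end

section
/- Let K be a commutative ring and n ≥ 0. Suppose the monoid C is a retract of the monoid B, i.e. there are monoid homomorphisms ψ: B → C and φ: C → B with ψ ∘ φ = id_C. If B is of type left-FP_n over K, then C is of type left-FP_n over K; likewise if B is of type right-FP_n over K, then so is C. -/
open Function LinearMap TensorProduct MulOpposite

/-!
A retraction `C → B → C` of monoids induces a retraction `KC → KB → KC` of augmented rings,
along which the identity of `K` is semilinear in both directions. So it suffices that `FP n`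
passes to semilinear retracts: if `Ψ ∘ Φ = id` for rings `R → S → R` and the `R`-module `M` is
a retract of the `S`-module `N` along a `Φ`-semilinear `i` and a `Ψ`-semilinear `p`, then `M`
is of type `FP n` whenever `N` is.

By induction on `n`: applying `Ψ` to coefficients turns a cover `e : Sᵏ → N` into a cover
`e' : Rᵏ → M` with `e' ∘ Ψ = p ∘ e`. Let `f : Sᵏ → N` be the linear map with `f ∘ Φ = i ∘ e'`.
Then `ker e'` is a semilinear retract of the kernel of the cover `(a, b) ↦ f a + e b` of `N`,
via `x ↦ (Φ x, 0)` and `(a, b) ↦ Ψ (a + b)`; and that kernel is `Sᵏ × ker e`, since `f` lifts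
through `e`.
-/

namespace IsFP

variable {R : Type*} [Ring R] {M M' : Type*} [AddCommGroup M] [Module R M]
  [AddCommGroup M'] [Module R M'] {n : ℕ}

theorem of_linearEquiv (f : M ≃ₗ[R] M') (h : IsFP R M n) : IsFP R M' n := by
  obtain ⟨r, d, e, he, h0, hd⟩ := h
  refine ⟨r, d, f.toLinearMap ∘ₗ e, f.surjective.comp he, fun hn => ?_, hd⟩
  rw [LinearEquiv.ker_comp, h0 hn]

theorem zero_iff : IsFP R M 0 ↔ ∃ (k : ℕ) (e : (Fin k → R) →ₗ[R] M), Surjective e := by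
  refine ⟨fun ⟨r, _, e, he, _⟩ => ⟨r 0, e, he⟩, fun ⟨k, e, he⟩ => ?_⟩
  exact ⟨fun _ => k, fun _ => 0, e, he, by simp, by simp⟩

theorem succ_iff : IsFP R M (n + 1) ↔
    ∃ (k : ℕ) (e : (Fin k → R) →ₗ[R] M), Surjective e ∧ IsFP R (ker e) n := by
  constructor
  · rintro ⟨r, d, e, he, h0, hd⟩
    have hker : ker e = range (d 0) := h0 n.succ_pos
    refine ⟨r 0, e, he, fun i => r (i + 1), fun i => d (i + 1),
      (d 0).codRestrict (ker e) (fun x => hker ▸ mem_range_self _ x), ?_, fun _ => ?_,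
      fun i hi => hd (i + 1) (by omega)⟩
    · rintro ⟨y, hy⟩
      obtain ⟨x, rfl⟩ := hker ▸ hy
      exact ⟨x, rfl⟩
    · rw [ker_codRestrict]
      exact hd 0 (by omega)
  · rintro ⟨k, e, he, r, d, e', he', h0, hd⟩
    refine ⟨fun j => Nat.casesOn j k r, fun i => Nat.casesOn i ((ker e).subtype ∘ₗ e') d,
      e, he, fun _ => ?_, ?_⟩
    · show ker e = range ((ker e).subtype ∘ₗ e')
      rw [range_comp, range_eq_top.mpr he', Submodule.map_subtype_top]
    · rintro (_ | i) hi
      · show ker ((ker e).subtype ∘ₗ e') = range (d 0)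
        rw [ker_comp, Submodule.ker_subtype, Submodule.comap_bot]
        exact h0 (by omega)
      · exact hd i (by omega)

theorem pi_fin (m : ℕ) : IsFP R (Fin m → R) n := by
  refine ⟨fun i => Nat.casesOn i m fun _ => 0, fun _ => 0, LinearMap.id, surjective_id,
    fun _ => ?_, fun i _ => ?_⟩
  · simp
  · cases i <;> exact Subsingleton.elim _ _

theorem prod (hM : IsFP R M n) (hM' : IsFP R M' n) : IsFP R (M × M') n := by
  obtain ⟨r, d, e, he, h0, hd⟩ := hM
  obtain ⟨r', d', e', he', h0', hd'⟩ := hM'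
  let E : ∀ i, (Fin (r i + r' i) → R) ≃ₗ[R] (Fin (r i) → R) × (Fin (r' i) → R) :=
    fun _ => (LinearEquiv.funCongrLeft R R finSumFinEquiv).trans
      (LinearEquiv.sumArrowLequivProdArrow _ _ R R)
  refine ⟨fun i => r i + r' i,
    fun i => (E i).symm.toLinearMap ∘ₗ (d i).prodMap (d' i) ∘ₗ (E (i + 1)).toLinearMap,
    e.prodMap e' ∘ₗ (E 0).toLinearMap, (he.prodMap he').comp (E 0).surjective,
    fun hn => ?_, fun i hi => ?_⟩
  · rw [ker_comp, ker_prodMap, h0 hn, h0' hn, range_comp, LinearEquiv.range_comp,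
      range_prodMap, Submodule.map_equiv_eq_comap_symm, LinearEquiv.symm_symm]
  · rw [LinearEquiv.ker_comp, ker_comp, ker_prodMap, hd i hi, hd' i hi, range_comp,
      LinearEquiv.range_comp, range_prodMap, Submodule.map_equiv_eq_comap_symm,
      LinearEquiv.symm_symm]

end IsFP

section SemilinearRetract

variable {R S : Type*} [Ring R] [Ring S]

def RingHom.compLeftₛₗ (σ : R →+* S) (ι : Type*) : (ι → R) →ₛₗ[σ] (ι → S) where
  toFun x := σ ∘ x
  map_add' x y := by ext; simp
  map_smul' c x := by ext; simp

@[simp]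
theorem RingHom.compLeftₛₗ_apply (σ : R →+* S) {ι : Type*} (x : ι → R) (t : ι) :
    σ.compLeftₛₗ ι x t = σ (x t) := rfl

theorem RingHom.compLeftₛₗ_single (σ : R →+* S) {ι : Type*} [DecidableEq ι] (t : ι) :
    σ.compLeftₛₗ ι (Pi.single t 1) = Pi.single t 1 := by
  ext s
  by_cases h : s = t <;> simp [h]

theorem Fintype.linearCombination_comp_compLeftₛₗ {M : Type*} [AddCommGroup M] [Module R M]
    {σ : S →+* R} {ι : Type*} [Fintype ι] [DecidableEq ι] (f : (ι → S) →ₛₗ[σ] M) :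
    Fintype.linearCombination R (fun t => f (Pi.single t 1)) ∘ₛₗ σ.compLeftₛₗ ι = f :=
  (Pi.basisFun S ι).ext fun t => by simp [RingHom.compLeftₛₗ_single]

def LinearMap.kerCoprodEquiv {F P N : Type*} [AddCommGroup F] [Module R F] [AddCommGroup P]
    [Module R P] [AddCommGroup N] [Module R N] (f : F →ₗ[R] N) (g : P →ₗ[R] N)
    (σ : F →ₗ[R] P) (hσ : g ∘ₗ σ = f) : ker (f.coprod g) ≃ₗ[R] F × ker g where
  toFun z := (z.1.1, ⟨z.1.2 + σ z.1.1, by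
    have := z.2
    simp_all [← hσ, add_comm]⟩)
  invFun x := ⟨(x.1, x.2.1 - σ x.1), by
    have := x.2.2
    simp_all [← hσ]⟩
  map_add' z w := by ext <;> simp; abel
  map_smul' c z := by ext <;> simp
  left_inv z := by ext <;> simp
  right_inv x := by ext <;> simp

variable {Φ : R →+* S} {Ψ : S →+* R} {M N : Type*} [AddCommGroup M] [Module R M]
  [AddCommGroup N] [Module S N]

theorem exists_surjective_comp_eq (p : N →ₛₗ[Ψ] M) (hp : Surjective p) {k : ℕ}
    (eP : (Fin k → S) →ₗ[S] N) (hP : Surjective eP) :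
    ∃ eQ : (Fin k → R) →ₗ[R] M, Surjective eQ ∧ eQ ∘ₛₗ Ψ.compLeftₛₗ _ = p ∘ₛₗ eP := by
  refine ⟨_, Surjective.of_comp (g := Ψ.compLeftₛₗ _) ?_,
    Fintype.linearCombination_comp_compLeftₛₗ (p ∘ₛₗ eP)⟩
  rw [← coe_comp, Fintype.linearCombination_comp_compLeftₛₗ, coe_comp]
  exact hp.comp hP

theorem exists_ker_retract (hΨΦ : LeftInverse Ψ Φ) (i : M →ₛₗ[Φ] N) (p : N →ₛₗ[Ψ] M)
    (hpi : LeftInverse p i) {k : ℕ} (eP : (Fin k → S) →ₗ[S] N) (eQ : (Fin k → R) →ₗ[R] M)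
    (hQ : eQ ∘ₛₗ Ψ.compLeftₛₗ _ = p ∘ₛₗ eP) :
    ∃ (f : (Fin k → S) →ₗ[S] N) (iK : ker eQ →ₛₗ[Φ] ker (f.coprod eP))
      (pK : ker (f.coprod eP) →ₛₗ[Ψ] ker eQ), LeftInverse pK iK := by
  set f := Fintype.linearCombination S fun t => i (eQ (Pi.single t 1))
  have hf : f ∘ₛₗ Φ.compLeftₛₗ _ = i ∘ₛₗ eQ :=
    Fintype.linearCombination_comp_compLeftₛₗ (i ∘ₛₗ eQ)
  have hf' : eQ ∘ₛₗ Ψ.compLeftₛₗ _ = p ∘ₛₗ f := (Pi.basisFun S _).ext fun t => by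
    have := congr($hf (Pi.single t 1))
    simp only [LinearMap.comp_apply, Pi.basisFun_apply, RingHom.compLeftₛₗ_single] at this ⊢
    rw [this, hpi]
  let iK : ker eQ →ₛₗ[Φ] (Fin k → S) × (Fin k → S) :=
    LinearMap.inl S _ _ ∘ₛₗ Φ.compLeftₛₗ _ ∘ₛₗ (ker eQ).subtype
  let pK : ker (f.coprod eP) →ₛₗ[Ψ] (Fin k → R) :=
    Ψ.compLeftₛₗ _ ∘ₛₗ
      ((LinearMap.fst S _ _ + LinearMap.snd S _ _) ∘ₗ (ker (f.coprod eP)).subtype)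
  refine ⟨f, iK.codRestrict _ fun x => ?_, pK.codRestrict _ fun z => ?_, fun x => ?_⟩
  · change f.coprod eP (Φ.compLeftₛₗ _ x, 0) = 0
    rw [coprod_apply, map_zero, add_zero, ← LinearMap.comp_apply, hf, LinearMap.comp_apply,
      mem_ker.mp x.2, map_zero]
  · change eQ (Ψ.compLeftₛₗ _ (z.1.1 + z.1.2)) = 0
    rw [map_add, map_add, ← LinearMap.comp_apply, hf', ← LinearMap.comp_apply (f := eQ), hQ,
      LinearMap.comp_apply, LinearMap.comp_apply, ← map_add, ← coprod_apply, mem_ker.mp z.2,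
      map_zero]
  · ext t
    change Ψ (Φ (x.1 t) + 0) = x.1 t
    rw [add_zero, hΨΦ]

end SemilinearRetract

universe u v w

-- `M` and `N` live in the universes of `R` and `S` because the induction passes to kernels.
theorem IsFP.of_retract {R : Type u} {S : Type v} [Ring R] [Ring S] {Φ : R →+* S}
    {Ψ : S →+* R} {M : Type u} {N : Type v} [AddCommGroup M] [Module R M] [AddCommGroup N]
    [Module S N] (hΨΦ : LeftInverse Ψ Φ) {n : ℕ} (i : M →ₛₗ[Φ] N) (p : N →ₛₗ[Ψ] M)
    (hpi : LeftInverse p i) (hN : IsFP S N n) : IsFP R M n := by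
  induction n generalizing M N with
  | zero =>
    obtain ⟨k, eP, hP⟩ := IsFP.zero_iff.mp hN
    obtain ⟨eQ, hQ, -⟩ := exists_surjective_comp_eq p hpi.surjective eP hP
    exact IsFP.zero_iff.mpr ⟨k, eQ, hQ⟩
  | succ n ih =>
    obtain ⟨k, eP, hP, hK⟩ := IsFP.succ_iff.mp hN
    obtain ⟨eQ, hQ, hQP⟩ := exists_surjective_comp_eq p hpi.surjective eP hP
    obtain ⟨f, iK, pK, hpiK⟩ := exists_ker_retract hΨΦ i p hpi eP eQ hQP
    obtain ⟨σ, hσ⟩ := Module.projective_lifting_property eP f hP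
    have hK' : IsFP S (ker (f.coprod eP)) n :=
      ((IsFP.pi_fin k).prod hK).of_linearEquiv (f.kerCoprodEquiv eP σ hσ).symm
    exact IsFP.succ_iff.mpr ⟨k, eQ, hQ, ih iK pK hpiK hK'⟩

theorem LeftFP.of_retract {K : Type w} [CommRing K] {R : Type max w u} {S : Type max w v}
    [Ring R] [Ring S] {εR : R →+* K} {εS : S →+* K} (Φ : R →+* S) (Ψ : S →+* R)
    (hΨΦ : LeftInverse Ψ Φ) (hΦ : εS.comp Φ = εR) (hΨ : εR.comp Ψ = εS) {n : ℕ}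
    (h : LeftFP S εS n) : LeftFP R εR n := by
  let _ : Module R K := Module.compHom K εR
  let _ : Module S K := Module.compHom K εS
  let i : ULift.{u} K →ₛₗ[Φ] ULift.{v} K :=
    { toFun x := ⟨x.down⟩
      map_add' _ _ := rfl
      map_smul' c x := ULift.ext _ _ (congr($hΦ c * x.down).symm) }
  let p : ULift.{v} K →ₛₗ[Ψ] ULift.{u} K :=
    { toFun x := ⟨x.down⟩
      map_add' _ _ := rfl
      map_smul' c x := ULift.ext _ _ (congr($hΨ c * x.down).symm) }
  exact (IsFP.of_retract hΨΦ i p (fun _ => rfl)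
    (h.of_linearEquiv ULift.moduleEquiv.symm)).of_linearEquiv ULift.moduleEquiv

theorem RightFP.of_retract {K : Type w} [CommRing K] {R : Type max w u} {S : Type max w v}
    [Ring R] [Ring S] {εR : R →+* K} {εS : S →+* K} (Φ : R →+* S) (Ψ : S →+* R)
    (hΨΦ : LeftInverse Ψ Φ) (hΦ : εS.comp Φ = εR) (hΨ : εR.comp Ψ = εS) {n : ℕ}
    (h : RightFP S εS n) : RightFP R εR n := by
  refine LeftFP.of_retract (RingHom.op Φ) (RingHom.op Ψ) (fun x => congrArg op (hΨΦ x.unop))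
    ?_ ?_ h
  · exact RingHom.ext fun x => congr($hΦ x.unop)
  · exact RingHom.ext fun x => congr($hΨ x.unop)

theorem aug_comp_mapDomainRingHom (K : Type*) [CommRing K] {B C : Type*} [Monoid B] [Monoid C]
    (f : C →* B) :
    (aug K B).toRingHom.comp (MonoidAlgebra.mapDomainRingHom K f) = (aug K C).toRingHom := by
  ext <;> simp [aug]

/-- If the monoid `C` is a retract of the monoid `B` (via `ψ : B →* C`,
`φ : C →* B` with `ψ ∘ φ = id`), then left-`FP n` and right-`FP n` over `K` pass from `B`
to `C`. -/
theorem monoid_retract_leftFP_rightFP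
    (K : Type*) [CommRing K] (B C : Type*) [Monoid B] [Monoid C] (n : ℕ)
    (ψ : B →* C) (φ : C →* B) (hψφ : ψ.comp φ = MonoidHom.id C) :
    (LeftFP (MonoidAlgebra K B) (aug K B).toRingHom n →
      LeftFP (MonoidAlgebra K C) (aug K C).toRingHom n) ∧
    (RightFP (MonoidAlgebra K B) (aug K B).toRingHom n →
      RightFP (MonoidAlgebra K C) (aug K C).toRingHom n) := by
  have hret : LeftInverse (MonoidAlgebra.mapDomainRingHom K ψ)
      (MonoidAlgebra.mapDomainRingHom K φ) := fun x => by
    rw [← RingHom.comp_apply, ← MonoidAlgebra.mapDomainRingHom_comp, hψφ,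
      MonoidAlgebra.mapDomainRingHom_id, RingHom.id_apply]
  exact ⟨LeftFP.of_retract _ _ hret (aug_comp_mapDomainRingHom K φ)
      (aug_comp_mapDomainRingHom K ψ),
    RightFP.of_retract _ _ hret (aug_comp_mapDomainRingHom K φ) (aug_comp_mapDomainRingHom K ψ)⟩
end

section
/- Let K be a commutative ring and n ≥ 0. Suppose the monoid C is a retract of the monoid B. If B is of type bi-FP_n over K, then C is of type bi-FP_n over K. -/
/-!
An `(A, A)`-bimodule is a module over the enveloping algebra `Aᵉ = A ⊗[K] Aᵐᵒᵖ`, and `A ⊗[K] A`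
with its outer actions is `Aᵉ` itself, so `A` is of type bi-`FP n` exactly when `A` is of type
`FP n` as an `Aᵉ`-module. A retraction of monoids `C → B → C` gives retractions of algebras
`KC → KB → KC` and of enveloping algebras `Cᵉ → Bᵉ → Cᵉ`, compatible with each other.

`FP n` descends along such a compatible pair of retractions (`p ∘ s = id` on rings, `q ∘ j = id`
on modules), by induction on `n`. A finite free cover `e : Rʳ → M` gives the cover of `N` by the
`q (e δᵢ)`. After adjoining the generators `j (q (e δᵢ))` to the cover of `M`, the cover of `N`
becomes a semilinear retract of it, the retraction restricts to the kernels, and the new kernel is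
`Rʳ × ker e`, again of type `FP (n - 1)`.
-/

open Function LinearMap TensorProduct MulOpposite

universe u v

section FreeResolution

variable {R : Type u} [Ring R] {M : Type*} [AddCommGroup M] [Module R M]
  {F G : Type*} [AddCommGroup F] [Module R F] [AddCommGroup G] [Module R G]

theorem isFP_zero_iff : IsFP R M 0 ↔ Module.Finite R M := by
  refine ⟨fun ⟨_, _, e, he, _⟩ => .of_surjective e he, fun _ => ?_⟩
  obtain ⟨m, f, hf⟩ := Module.Finite.exists_fin' R M
  exact ⟨fun _ => m, fun _ => 0, f, hf, fun h => absurd h (lt_irrefl 0),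
    fun _ h => absurd h (Nat.not_lt_zero _)⟩

theorem isFP_succ_iff {n : ℕ} : IsFP R M (n + 1) ↔
    ∃ (m : ℕ) (f : (Fin m → R) →ₗ[R] M), Surjective f ∧ IsFP R (ker f) n := by
  constructor
  · rintro ⟨r, d, e, he, h0, hd⟩
    have h0 := h0 n.succ_pos
    refine ⟨r 0, e, he, fun i => r (i + 1), fun i => d (i + 1),
      (d 0).codRestrict (ker e) fun x => h0 ▸ mem_range_self (d 0) x, ?_,
      fun _ => by rw [ker_codRestrict]; exact hd 0 (by omega),
      fun i _ => hd (i + 1) (by omega)⟩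
    rintro ⟨y, hy⟩
    obtain ⟨x, rfl⟩ := (h0 ▸ hy : y ∈ range (d 0))
    exact ⟨x, rfl⟩
  · rintro ⟨m, f, hf, r, d, e, he, h0, hd⟩
    let r' : ℕ → ℕ := fun | 0 => m | i + 1 => r i
    let d' : ∀ i, (Fin (r' (i + 1)) → R) →ₗ[R] (Fin (r' i) → R) := fun
      | 0 => (ker f).subtype ∘ₗ e
      | i + 1 => d i
    refine ⟨r', d', f, hf, fun _ => ?_, fun i hi => ?_⟩
    · change ker f = range ((ker f).subtype ∘ₗ e)
      rw [range_comp, range_eq_top.mpr he, Submodule.map_subtype_top]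
    · match i with
      | 0 =>
        change ker ((ker f).subtype ∘ₗ e) = range (d 0)
        rw [ker_comp, Submodule.ker_subtype, ← h0 (by omega)]
        rfl
      | i + 1 => exact hd i (by omega)

theorem IsFP.of_linearEquiv_s5 {N : Type*} [AddCommGroup N] [Module R N] (φ : M ≃ₗ[R] N) {n : ℕ}
    (h : IsFP R M n) : IsFP R N n := by
  obtain ⟨r, d, e, he, h0, hd⟩ := h
  refine ⟨r, d, φ ∘ₗ e, φ.surjective.comp he, fun hn => ?_, hd⟩
  rw [LinearEquiv.ker_comp, h0 hn]

theorem isFP_succ_of_surjective [Module.Free R F] [Module.Finite R F] {n : ℕ} (f : F →ₗ[R] M)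
    (hf : Surjective f) (h : IsFP R (ker f) n) : IsFP R M (n + 1) := by
  let E : (Fin _ → R) ≃ₗ[R] F := (LinearEquiv.funCongrLeft R R (Fintype.equivFin _)).trans
    (Module.Free.chooseBasis R F).equivFun.symm
  refine isFP_succ_iff.mpr ⟨_, f ∘ₗ E.toLinearMap, hf.comp E.surjective, ?_⟩
  rw [ker_comp]
  exact h.of_linearEquiv_s5 (E.ofSubmodule' (ker f)).symm

theorem IsFP.prod_free [Module.Free R F] [Module.Finite R F] :
    ∀ {n : ℕ}, IsFP R M n → IsFP R (F × M) n
  | 0, h => by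
    have := isFP_zero_iff.mp h
    exact isFP_zero_iff.mpr inferInstance
  | n + 1, h => by
    obtain ⟨m, f, hf, hker⟩ := isFP_succ_iff.mp h
    refine isFP_succ_of_surjective ((LinearMap.id : F →ₗ[R] F).prodMap f)
      (surjective_id.prodMap hf) (hker.of_linearEquiv_s5 ?_)
    refine (Submodule.equivMapOfInjective _ (inr_injective (M := F)) (ker f)).trans
      (LinearEquiv.ofEq _ _ ?_)
    rw [Submodule.map_inr, ker_prodMap, ker_id]

def kerCoprodCompEquiv (f : F →ₗ[R] M) (h : G →ₗ[R] F) :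
    ker ((f ∘ₗ h).coprod f) ≃ₗ[R] G × ker f where
  toFun z := (z.1.1, ⟨h z.1.1 + z.1.2, mem_ker.mpr <| by rw [map_add]; exact z.2⟩)
  invFun w := ⟨(w.1, w.2 - h w.1), by simp⟩
  map_add' z w := by ext <;> simp [add_add_add_comm]
  map_smul' c z := by ext <;> simp
  left_inv z := by ext <;> simp
  right_inv w := by ext <;> simp

theorem IsFP.ker_coprod_comp [Module.Free R G] [Module.Finite R G] {n : ℕ} {f : F →ₗ[R] M}
    (hf : IsFP R (ker f) n) (h : G →ₗ[R] F) : IsFP R (ker ((f ∘ₗ h).coprod f)) n :=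
  hf.prod_free.of_linearEquiv_s5 (kerCoprodCompEquiv f h).symm

end FreeResolution

section Semilinear

variable {R S : Type*} [Semiring R] [Semiring S] {p : R →+* S}

variable (p) in
def RingHom.compLeftSemilinear (ι : Type*) : (ι → R) →ₛₗ[p] (ι → S) where
  toFun x := p ∘ x
  map_add' x y := funext fun i => map_add p (x i) (y i)
  map_smul' c x := funext fun i => map_mul p c (x i)

theorem RingHom.compLeftSemilinear_leftInverse {s : S →+* R} (hps : LeftInverse p s)
    (ι : Type*) : LeftInverse (p.compLeftSemilinear ι) (s.compLeftSemilinear ι) :=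
  fun y => funext fun i => hps (y i)

variable {M N : Type*} [AddCommMonoid M] [Module R M] [AddCommMonoid N] [Module S N]

theorem LinearMap.map_linearCombination {ι : Type*} [Fintype ι] (q : M →ₛₗ[p] N) (v : ι → M)
    (x : ι → R) :
    q (Fintype.linearCombination R v x) =
      Fintype.linearCombination S (q ∘ v) (p.compLeftSemilinear ι x) := by
  simp only [Fintype.linearCombination_apply, map_sum, map_smulₛₗ]
  rfl

theorem LinearMap.map_apply_eq_linearCombination {ι : Type*} [Fintype ι] [DecidableEq ι]
    (q : M →ₛₗ[p] N) (e : (ι → R) →ₗ[R] M) (x : ι → R) :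
    q (e x) = Fintype.linearCombination S (fun i => q (e (Pi.single i 1)))
      (p.compLeftSemilinear ι x) := by
  conv_lhs => rw [← Finset.univ_sum_single x]
  rw [map_sum, map_sum, Fintype.linearCombination_apply]
  refine Finset.sum_congr rfl fun i _ => ?_
  rw [← mul_one (x i), ← smul_eq_mul, Pi.single_smul', map_smul, map_smulₛₗ]
  rfl

end Semilinear

section Retract

variable {R : Type u} {S : Type v} [Ring R] [Ring S] {p : R →+* S} {s : S →+* R}
  {M N : Type*} [AddCommGroup M] [Module R M] [AddCommGroup N] [Module S N]

theorem IsFP.zero_of_surjective (q : M →ₛₗ[p] N) (hq : Surjective q) (hM : IsFP R M 0) :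
    IsFP S N 0 :=
  have := isFP_zero_iff.mp hM
  isFP_zero_iff.mpr (.of_surjective q hq)

theorem IsFP.succ_of_retract (hps : LeftInverse p s) {n : ℕ}
    (ih : ∀ {M : Type u} {N : Type v} [AddCommGroup M] [Module R M] [AddCommGroup N] [Module S N]
      (q : M →ₛₗ[p] N) (j : N →ₛₗ[s] M), LeftInverse q j → IsFP R M n → IsFP S N n)
    (q : M →ₛₗ[p] N) (j : N →ₛₗ[s] M) (hqj : LeftInverse q j) (hM : IsFP R M (n + 1)) :
    IsFP S N (n + 1) := by
  obtain ⟨r, e, he, hker⟩ := isFP_succ_iff.mp hM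
  let g : Fin r → M := fun i => e (Pi.single i 1)
  let eN := Fintype.linearCombination S (q ∘ g)
  have hqe : ∀ x, q (e x) = eN (p.compLeftSemilinear _ x) := q.map_apply_eq_linearCombination e
  have heN : Surjective eN := fun y => by
    obtain ⟨x, hx⟩ := he (j y)
    exact ⟨_, by rw [← hqe, hx, hqj]⟩
  -- Adjoining the generators `j (q (g i))` to the `g i` makes the cover of `N` a retract of the
  -- cover of `M`: `Q` adds the two halves, `J` puts `s ∘ y` into the new half.
  obtain ⟨h, hh⟩ := Module.projective_lifting_property e
    (Fintype.linearCombination R (j ∘ q ∘ g)) he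
  let Q : ((Fin r → R) × (Fin r → R)) →ₛₗ[p] (Fin r → S) :=
    p.compLeftSemilinear _ ∘ₛₗ LinearMap.id.coprod LinearMap.id
  let J : (Fin r → S) →ₛₗ[s] ((Fin r → R) × (Fin r → R)) :=
    LinearMap.inl R _ _ ∘ₛₗ s.compLeftSemilinear _
  have hQ : ∀ w, eN (Q w) = q ((e ∘ₗ h).coprod e w) := fun ⟨x, y⟩ => by
    have hqjq : q ∘ j ∘ q ∘ g = q ∘ g := funext fun i => hqj _
    change eN (p.compLeftSemilinear _ (x + y)) = q (e (h x) + e y)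
    rw [map_add, map_add, map_add, hqe y, ← LinearMap.comp_apply e h, hh,
      q.map_linearCombination, hqjq]
  have hJ : ∀ y, (e ∘ₗ h).coprod e (J y) = j (eN y) := fun y => by
    change e (h (s.compLeftSemilinear _ y)) + e 0 = j (eN y)
    rw [map_zero, add_zero, ← LinearMap.comp_apply e h, hh, j.map_linearCombination]
  refine isFP_succ_iff.mpr ⟨r, eN, heN, ih (Q.restrict fun w hw => ?_)
    (J.restrict fun y hy => ?_) (fun y => Subtype.ext ?_) (hker.ker_coprod_comp h)⟩
  · rw [mem_ker, hQ, mem_ker.mp hw, map_zero]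
  · rw [mem_ker, hJ, mem_ker.mp hy, map_zero]
  · change p.compLeftSemilinear _ (s.compLeftSemilinear _ y.1 + 0) = y.1
    rw [add_zero]
    exact p.compLeftSemilinear_leftInverse hps _ _

theorem IsFP.of_retract_s5 (hps : LeftInverse p s) (q : M →ₛₗ[p] N) (j : N →ₛₗ[s] M)
    (hqj : LeftInverse q j) {n : ℕ} (hM : IsFP R M n) : IsFP S N n := by
  -- The induction runs over modules in the universes of `R` and `S`, where the kernels live.
  suffices key : ∀ n, ∀ {M : Type u} {N : Type v} [AddCommGroup M] [Module R M] [AddCommGroup N]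
      [Module S N] (q : M →ₛₗ[p] N) (j : N →ₛₗ[s] M), LeftInverse q j → IsFP R M n → IsFP S N n by
    cases n with
    | zero => exact hM.zero_of_surjective q hqj.surjective
    | succ n => exact hM.succ_of_retract hps (key n) q j hqj
  intro n
  induction n with
  | zero => exact fun q _ hqj hM => hM.zero_of_surjective q hqj.surjective
  | succ n ih => exact fun q j hqj hM => hM.succ_of_retract hps ih q j hqj

end Retract

theorem LinearMap.ker_eq_range_iff_of_ladder {R S X₁ X₂ X₃ Y₁ Y₂ Y₃ : Type*} [Semiring R]
    [Semiring S] [AddCommMonoid X₁] [AddCommMonoid X₂] [AddCommMonoid X₃] [AddCommMonoid Y₁]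
    [AddCommMonoid Y₂] [AddCommMonoid Y₃] [Module R X₁] [Module R X₂] [Module R X₃] [Module S Y₁]
    [Module S Y₂] [Module S Y₃] {f : X₁ →ₗ[R] X₂} {g : X₂ →ₗ[R] X₃} {f' : Y₁ →ₗ[S] Y₂}
    {g' : Y₂ →ₗ[S] Y₃} (e₁ : X₁ ≃+ Y₁) (e₂ : X₂ ≃+ Y₂) (e₃ : X₃ ≃+ Y₃)
    (h₁₂ : ∀ x, f' (e₁ x) = e₂ (f x)) (h₂₃ : ∀ x, g' (e₂ x) = e₃ (g x)) :
    ker g' = range f' ↔ ker g = range f := by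
  rw [← exact_iff, ← exact_iff]
  exact Exact.iff_of_ladder_addEquiv e₁ e₂ e₃ (f₁₂ := f.toAddMonoidHom) (f₂₃ := g.toAddMonoidHom)
    (g₁₂ := f'.toAddMonoidHom) (g₂₃ := g'.toAddMonoidHom) (AddMonoidHom.ext h₁₂)
    (AddMonoidHom.ext h₂₃)

def AddMonoidHom.toTensorLinearMap {K A B P Q : Type*} [CommSemiring K] [Semiring A]
    [Semiring B] [Algebra K A] [Algebra K B] [AddCommMonoid P] [Module (A ⊗[K] B) P]
    [AddCommMonoid Q] [Module (A ⊗[K] B) Q] (f : P →+ Q)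
    (hl : ∀ (a : A) x, f ((a ⊗ₜ[K] (1 : B)) • x) = (a ⊗ₜ[K] (1 : B)) • f x)
    (hr : ∀ (b : B) x, f (((1 : A) ⊗ₜ[K] b) • x) = ((1 : A) ⊗ₜ[K] b) • f x) :
    P →ₗ[A ⊗[K] B] Q where
  toFun := f
  map_add' := f.map_add
  map_smul' ρ x := by
    rw [RingHom.id_apply]
    induction ρ using TensorProduct.induction_on with
    | zero => simp
    | tmul a b =>
      rw [← mul_one a, ← one_mul b, ← Algebra.TensorProduct.tmul_mul_tmul, mul_smul, mul_smul,
        hl, hr]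
    | add ρ σ hρ hσ => rw [add_smul, add_smul, map_add, hρ, hσ]

section Bimodule

variable {K A : Type*} [CommRing K] [Ring A] [Algebra K A]

variable (K A) in
def tensorOpEquiv : A ⊗[K] A ≃ₗ[K] A ⊗[K] Aᵐᵒᵖ := LinearEquiv.lTensor A (opLinearEquiv K)

variable (K A) in
def piTensorOpEquiv (ι : Type*) : (ι → A ⊗[K] A) ≃ₗ[K] (ι → A ⊗[K] Aᵐᵒᵖ) :=
  LinearEquiv.piCongrRight fun _ => tensorOpEquiv K A

theorem tensorOpEquiv_lmulT (a : A) (z : A ⊗[K] A) :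
    tensorOpEquiv K A (lmulT K A a z) = (a ⊗ₜ[K] (1 : Aᵐᵒᵖ)) * tensorOpEquiv K A z := by
  induction z using TensorProduct.induction_on with
  | zero => simp
  | tmul x y => simp [tensorOpEquiv, lmulT]
  | add z w hz hw => rw [map_add, map_add, hz, hw, ← mul_add, map_add]

theorem tensorOpEquiv_rmulT (b : A) (z : A ⊗[K] A) :
    tensorOpEquiv K A (rmulT K A b z) = ((1 : A) ⊗ₜ[K] op b) * tensorOpEquiv K A z := by
  induction z using TensorProduct.induction_on with
  | zero => simp
  | tmul x y => simp [tensorOpEquiv, rmulT]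
  | add z w hz hw => rw [map_add, map_add, hz, hw, ← mul_add, map_add]

theorem piTensorOpEquiv_lmulT {ι : Type*} (a : A) (y : ι → A ⊗[K] A) :
    piTensorOpEquiv K A ι ((lmulT K A a).compLeft ι y) =
      (a ⊗ₜ[K] (1 : Aᵐᵒᵖ)) • piTensorOpEquiv K A ι y :=
  funext fun i => tensorOpEquiv_lmulT a (y i)

theorem piTensorOpEquiv_rmulT {ι : Type*} (b : A) (y : ι → A ⊗[K] A) :
    piTensorOpEquiv K A ι ((rmulT K A b).compLeft ι y) =
      ((1 : A) ⊗ₜ[K] op b) • piTensorOpEquiv K A ι y :=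
  funext fun i => tensorOpEquiv_rmulT b (y i)

theorem piTensorOpEquiv_symm_lmulT {ι : Type*} (a : A) (x : ι → A ⊗[K] Aᵐᵒᵖ) :
    (piTensorOpEquiv K A ι).symm ((a ⊗ₜ[K] (1 : Aᵐᵒᵖ)) • x) =
      (lmulT K A a).compLeft ι ((piTensorOpEquiv K A ι).symm x) := by
  rw [LinearEquiv.symm_apply_eq, piTensorOpEquiv_lmulT, LinearEquiv.apply_symm_apply]

theorem piTensorOpEquiv_symm_rmulT {ι : Type*} (b : A) (x : ι → A ⊗[K] Aᵐᵒᵖ) :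
    (piTensorOpEquiv K A ι).symm (((1 : A) ⊗ₜ[K] op b) • x) =
      (rmulT K A b).compLeft ι ((piTensorOpEquiv K A ι).symm x) := by
  rw [LinearEquiv.symm_apply_eq, piTensorOpEquiv_rmulT, LinearEquiv.apply_symm_apply]

variable {M : Type*} [AddCommGroup M] [Module K M] [Module (A ⊗[K] Aᵐᵒᵖ) M]

theorem resolution_iff_of_piTensorOpEquiv {r : ℕ → ℕ} {n : ℕ}
    {d : ∀ i, (Fin (r (i + 1)) → A ⊗[K] A) →ₗ[K] (Fin (r i) → A ⊗[K] A)}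
    {e : (Fin (r 0) → A ⊗[K] A) →ₗ[K] M}
    {D : ∀ i, (Fin (r (i + 1)) → A ⊗[K] Aᵐᵒᵖ) →ₗ[A ⊗[K] Aᵐᵒᵖ] (Fin (r i) → A ⊗[K] Aᵐᵒᵖ)}
    {E : (Fin (r 0) → A ⊗[K] Aᵐᵒᵖ) →ₗ[A ⊗[K] Aᵐᵒᵖ] M}
    (hD : ∀ i y, D i (piTensorOpEquiv K A _ y) = piTensorOpEquiv K A _ (d i y))
    (hE : ∀ y, E (piTensorOpEquiv K A _ y) = e y) :
    (Surjective E ∧ (0 < n → ker E = range (D 0)) ∧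
        ∀ i, i + 1 < n → ker (D i) = range (D (i + 1))) ↔
      (Surjective e ∧ (0 < n → ker e = range (d 0)) ∧
        ∀ i, i + 1 < n → ker (d i) = range (d (i + 1))) := by
  have he : ⇑e = E ∘ piTensorOpEquiv K A _ := funext fun y => (hE y).symm
  refine and_congr ?_ (and_congr (imp_congr_right fun _ => ?_)
    (forall_congr' fun i => imp_congr_right fun _ => ?_))
  · rw [he, Surjective.of_comp_iff _ (LinearEquiv.surjective _)]
  · exact ker_eq_range_iff_of_ladder (piTensorOpEquiv K A _).toAddEquiv
      (piTensorOpEquiv K A _).toAddEquiv (AddEquiv.refl M) (hD 0) hE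
  · exact ker_eq_range_iff_of_ladder (piTensorOpEquiv K A _).toAddEquiv
      (piTensorOpEquiv K A _).toAddEquiv (piTensorOpEquiv K A _).toAddEquiv (hD (i + 1)) (hD i)

theorem IsBiFP.isFP {lact ract : A → M →ₗ[K] M}
    (hl : ∀ a m, lact a m = (a ⊗ₜ[K] (1 : Aᵐᵒᵖ)) • m)
    (hr : ∀ b m, ract b m = ((1 : A) ⊗ₜ[K] op b) • m) {n : ℕ}
    (h : IsBiFP K A M lact ract n) : IsFP (A ⊗[K] Aᵐᵒᵖ) M n := by
  let θ (m : ℕ) := piTensorOpEquiv K A (Fin m)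
  obtain ⟨r, d, e, hdl, hdr, hel, her, hres⟩ := h
  let D (i : ℕ) : (Fin (r (i + 1)) → A ⊗[K] Aᵐᵒᵖ) →ₗ[A ⊗[K] Aᵐᵒᵖ] (Fin (r i) → A ⊗[K] Aᵐᵒᵖ) :=
    AddMonoidHom.toTensorLinearMap
      ((θ _).toLinearMap ∘ₗ d i ∘ₗ (θ _).symm.toLinearMap).toAddMonoidHom
      (fun a x => by
        simp [θ, piTensorOpEquiv_symm_lmulT, ← LinearMap.comp_apply (d i), hdl,
          piTensorOpEquiv_lmulT])
      (fun b x => by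
        induction b using MulOpposite.rec'
        simp [θ, piTensorOpEquiv_symm_rmulT, ← LinearMap.comp_apply (d i), hdr,
          piTensorOpEquiv_rmulT])
  let E : (Fin (r 0) → A ⊗[K] Aᵐᵒᵖ) →ₗ[A ⊗[K] Aᵐᵒᵖ] M :=
    AddMonoidHom.toTensorLinearMap (e ∘ₗ (θ _).symm.toLinearMap).toAddMonoidHom
      (fun a x => by simp [θ, piTensorOpEquiv_symm_lmulT, ← LinearMap.comp_apply e, hel, hl])
      (fun b x => by
        induction b using MulOpposite.rec'
        simp [θ, piTensorOpEquiv_symm_rmulT, ← LinearMap.comp_apply e, her, hr])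
  exact ⟨r, D, E, (resolution_iff_of_piTensorOpEquiv (D := D) (E := E)
    (fun i y => congrArg (θ _ ∘ d i) ((θ _).symm_apply_apply y))
    (fun y => congrArg e ((θ _).symm_apply_apply y))).mpr hres⟩

theorem IsFP.isBiFP [IsScalarTower K (A ⊗[K] Aᵐᵒᵖ) M] {lact ract : A → M →ₗ[K] M}
    (hl : ∀ a m, lact a m = (a ⊗ₜ[K] (1 : Aᵐᵒᵖ)) • m)
    (hr : ∀ b m, ract b m = ((1 : A) ⊗ₜ[K] op b) • m) {n : ℕ}
    (h : IsFP (A ⊗[K] Aᵐᵒᵖ) M n) : IsBiFP K A M lact ract n := by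
  let θ (m : ℕ) := piTensorOpEquiv K A (Fin m)
  obtain ⟨r, D, E, hres⟩ := h
  let d i := (θ _).symm.toLinearMap ∘ₗ (D i).restrictScalars K ∘ₗ (θ (r (i + 1))).toLinearMap
  let e := E.restrictScalars K ∘ₗ (θ _).toLinearMap
  refine ⟨r, d, e, fun i a => ?_, fun i b => ?_, fun a => ?_, fun b => ?_,
    (resolution_iff_of_piTensorOpEquiv (d := d) (e := e) (fun i y => ?_) (fun y => ?_)).mp hres⟩
  · refine LinearMap.ext fun y => ?_
    simp [d, θ, piTensorOpEquiv_lmulT, piTensorOpEquiv_symm_lmulT]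
  · refine LinearMap.ext fun y => ?_
    simp [d, θ, piTensorOpEquiv_rmulT, piTensorOpEquiv_symm_rmulT]
  · refine LinearMap.ext fun y => ?_
    simp [e, θ, piTensorOpEquiv_lmulT, hl]
  · refine LinearMap.ext fun y => ?_
    simp [e, θ, piTensorOpEquiv_rmulT, hr]
  · exact ((θ _).apply_symm_apply _).symm
  · rfl

end Bimodule

section AlgebraRetract

attribute [local instance] instModuleTensorProductMop

variable {K A A' : Type*} [CommRing K] [Ring A] [Algebra K A] [Ring A'] [Algebra K A']

theorem tmul_smul_eq_mul_mul (a x : A) (b : Aᵐᵒᵖ) : (a ⊗ₜ[K] b) • x = a * x * b.unop := by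
  change a • b • x = _
  rw [smul_eq_mul, MulOpposite.smul_eq_mul_unop, mul_assoc]

instance : IsScalarTower K (A ⊗[K] Aᵐᵒᵖ) A :=
  IsScalarTower.of_algebraMap_smul (A := A ⊗[K] Aᵐᵒᵖ) fun k x => by
    change (algebraMap K A k ⊗ₜ[K] (1 : Aᵐᵒᵖ)) • x = k • x
    rw [tmul_smul_eq_mul_mul, unop_one, mul_one, Algebra.smul_def]

theorem biFP_iff_isFP {n : ℕ} : BiFP K A n ↔ IsFP (A ⊗[K] Aᵐᵒᵖ) A n := by
  have hl (a x : A) : a * x = (a ⊗ₜ[K] (1 : Aᵐᵒᵖ)) • x := by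
    rw [tmul_smul_eq_mul_mul, unop_one, mul_one]
  have hr (b x : A) : x * b = ((1 : A) ⊗ₜ[K] op b) • x := by
    rw [tmul_smul_eq_mul_mul, unop_op, one_mul]
  exact ⟨IsBiFP.isFP hl hr, IsFP.isBiFP hl hr⟩

def AlgHom.tensorOpMap (f : A →ₐ[K] A') : A ⊗[K] Aᵐᵒᵖ →ₐ[K] A' ⊗[K] A'ᵐᵒᵖ :=
  Algebra.TensorProduct.map f (AlgHom.op f)

theorem AlgHom.tensorOpMap_leftInverse {π : A →ₐ[K] A'} {σ : A' →ₐ[K] A}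
    (h : LeftInverse π σ) : LeftInverse π.tensorOpMap σ.tensorOpMap := fun t => by
  induction t using TensorProduct.induction_on with
  | zero => simp
  | tmul a b => simp [tensorOpMap, h a, h b.unop]
  | add t t' ht ht' => rw [map_add, map_add, ht, ht']

def AlgHom.toTensorOpSemilinearMap (f : A →ₐ[K] A') :
    A →ₛₗ[(f.tensorOpMap : A ⊗[K] Aᵐᵒᵖ →+* A' ⊗[K] A'ᵐᵒᵖ)] A' where
  toFun := f
  map_add' := map_add f
  map_smul' ρ x := by
    induction ρ using TensorProduct.induction_on with
    | zero =>
      rw [map_zero]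
      exact (congrArg f (zero_smul (A ⊗[K] Aᵐᵒᵖ) x)).trans
        ((map_zero f).trans (zero_smul (A' ⊗[K] A'ᵐᵒᵖ) (f x)).symm)
    | tmul a b => simp [tensorOpMap, tmul_smul_eq_mul_mul]
    | add ρ σ hρ hσ => rw [add_smul, map_add, hρ, hσ, map_add, add_smul]

theorem BiFP.of_retract_s5 {n : ℕ} (π : A →ₐ[K] A') (σ : A' →ₐ[K] A) (h : LeftInverse π σ)
    (hA : BiFP K A n) : BiFP K A' n := by
  rw [biFP_iff_isFP] at hA ⊢
  exact hA.of_retract_s5 (AlgHom.tensorOpMap_leftInverse h) π.toTensorOpSemilinearMap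
    σ.toTensorOpSemilinearMap h

end AlgebraRetract

/-- If the monoid `C` is a retract of the monoid `B` and `B` is of type
bi-`FP n` over `K`, then `C` is of type bi-`FP n` over `K`. -/
theorem monoid_retract_biFP
    (K : Type*) [CommRing K] (B C : Type*) [Monoid B] [Monoid C] (n : ℕ)
    (ψ : B →* C) (φ : C →* B) (hψφ : ψ.comp φ = MonoidHom.id C)
    (h : BiFP K (MonoidAlgebra K B) n) :
    BiFP K (MonoidAlgebra K C) n :=
  h.of_retract_s5 (MonoidAlgebra.mapDomainAlgHom K K ψ) (MonoidAlgebra.mapDomainAlgHom K K φ)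
    fun x => by
      rw [← AlgHom.comp_apply, ← MonoidAlgebra.mapDomainAlgHom_comp, hψφ,
        MonoidAlgebra.mapDomainAlgHom_id, AlgHom.id_apply]
end

section
/- Let K be a commutative ring and n ≥ 0. Let A and D be K-algebras such that D is a retract of A, i.e. there are K-algebra homomorphisms κ: A → D and θ: D → A with κ ∘ θ = id_D. If A is of type bi-FP_n, then D is of type bi-FP_n. -/
open Function LinearMap TensorProduct MulOpposite

/-! If `W` is a retract of `X` along `κ`, `θ` (maps `p : X → W`, `s : W → X` twisted by `κ` and
`θ` with `p ∘ s = id`) and `X` is bi-`FP n` over `A`, then `W` is bi-`FP n` over `D`; the theorem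
is the case `X = A`, `W = D`. Induct on `n`. A free presentation `e : F → X` yields the
presentation `η = p ∘ e ∘ θ_*` of `W`. Lifting `s ∘ p ∘ e` on the generators of `F` through `e`
gives a bimodule map `u : F → F`, and with it `ker η` is again a retract of `ker e ⊕ F`, which is
bi-`FP (n - 1)` because `ker e` is. -/

universe u v

noncomputable abbrev freeLeft (K A ι : Type*) [CommRing K] [Ring A] [Algebra K A] (a : A) :
    (ι → A ⊗[K] A) →ₗ[K] ι → A ⊗[K] A :=
  (lmulT K A a).compLeft ι

noncomputable abbrev freeRight (K A ι : Type*) [CommRing K] [Ring A] [Algebra K A] (b : A) :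
    (ι → A ⊗[K] A) →ₗ[K] ι → A ⊗[K] A :=
  (rmulT K A b).compLeft ι

section Bimodule

variable {K : Type*} [CommRing K]

structure IsBimoduleHomAlong {A B X Y : Type*} [AddCommGroup X] [Module K X]
    [AddCommGroup Y] [Module K Y] (φ : A → B) (lX rX : A → X →ₗ[K] X)
    (lY rY : B → Y →ₗ[K] Y) (f : X →ₗ[K] Y) : Prop where
  map_left : ∀ a x, f (lX a x) = lY (φ a) (f x)
  map_right : ∀ b x, f (rX b x) = rY (φ b) (f x)

namespace IsBimoduleHomAlong

variable {A B C X Y Z : Type*} [AddCommGroup X] [Module K X] [AddCommGroup Y] [Module K Y]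
  [AddCommGroup Z] [Module K Z] {lX rX : A → X →ₗ[K] X}

section Along

variable {φ : A → B} {lY rY : B → Y →ₗ[K] Y}

theorem iff_comp_eq {f : X →ₗ[K] Y} :
    IsBimoduleHomAlong φ lX rX lY rY f ↔
      (∀ a, f ∘ₗ lX a = lY (φ a) ∘ₗ f) ∧ ∀ b, f ∘ₗ rX b = rY (φ b) ∘ₗ f := by
  refine ⟨fun h => ⟨fun a => ?_, fun b => ?_⟩, fun h => ⟨fun a x => ?_, fun b x => ?_⟩⟩
  · ext x; exact h.map_left a x
  · ext x; exact h.map_right b x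
  · exact LinearMap.congr_fun (h.1 a) x
  · exact LinearMap.congr_fun (h.2 b) x

theorem comp {ψ : B → C} {lZ rZ : C → Z →ₗ[K] Z} {g : Y →ₗ[K] Z} {f : X →ₗ[K] Y}
    (hg : IsBimoduleHomAlong ψ lY rY lZ rZ g) (hf : IsBimoduleHomAlong φ lX rX lY rY f) :
    IsBimoduleHomAlong (ψ ∘ φ) lX rX lZ rZ (g ∘ₗ f) :=
  ⟨fun a x => by simp [hf.map_left, hg.map_left], fun b x => by simp [hf.map_right, hg.map_right]⟩

theorem prodMap {lX' rX' : A → Z →ₗ[K] Z} {Y' : Type*} [AddCommGroup Y'] [Module K Y']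
    {lY' rY' : B → Y' →ₗ[K] Y'} {f : X →ₗ[K] Y} {f' : Z →ₗ[K] Y'}
    (hf : IsBimoduleHomAlong φ lX rX lY rY f) (hf' : IsBimoduleHomAlong φ lX' rX' lY' rY' f') :
    IsBimoduleHomAlong φ (fun a => (lX a).prodMap (lX' a)) (fun b => (rX b).prodMap (rX' b))
      (fun a => (lY a).prodMap (lY' a)) (fun b => (rY b).prodMap (rY' b)) (f.prodMap f') :=
  ⟨fun a x => by simp [hf.map_left, hf'.map_left], fun b x => by simp [hf.map_right, hf'.map_right]⟩

end Along

section Ker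

variable {lY rY : A → Y →ₗ[K] Y}

theorem symm (σ : X ≃ₗ[K] Y)
    (hσ : IsBimoduleHomAlong id lX rX lY rY σ.toLinearMap) :
    IsBimoduleHomAlong id lY rY lX rX σ.symm.toLinearMap :=
  ⟨fun a y => σ.injective (by simpa using (hσ.map_left a (σ.symm y)).symm),
    fun b y => σ.injective (by simpa using (hσ.map_right b (σ.symm y)).symm)⟩

variable {f : X →ₗ[K] Y}

def kerLeft (hf : IsBimoduleHomAlong id lX rX lY rY f) (a : A) : ker f →ₗ[K] ker f :=
  (lX a).restrict fun x hx => by rw [mem_ker, hf.map_left, mem_ker.1 hx, map_zero]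

def kerRight (hf : IsBimoduleHomAlong id lX rX lY rY f) (b : A) : ker f →ₗ[K] ker f :=
  (rX b).restrict fun x hx => by rw [mem_ker, hf.map_right, mem_ker.1 hx, map_zero]

theorem subtype_ker (hf : IsBimoduleHomAlong id lX rX lY rY f) :
    IsBimoduleHomAlong id hf.kerLeft hf.kerRight lX rX (ker f).subtype :=
  ⟨fun _ _ => rfl, fun _ _ => rfl⟩

theorem codRestrict_ker {C W : Type*} [AddCommGroup W] [Module K W] {ψ : C → A}
    {lW rW : C → W →ₗ[K] W} (hf : IsBimoduleHomAlong id lX rX lY rY f) {g : W →ₗ[K] X}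
    (hg : IsBimoduleHomAlong ψ lW rW lX rX g) (hgf : ∀ w, g w ∈ ker f) :
    IsBimoduleHomAlong ψ lW rW hf.kerLeft hf.kerRight (g.codRestrict (ker f) hgf) :=
  ⟨fun c w => Subtype.ext (hg.map_left c w), fun c w => Subtype.ext (hg.map_right c w)⟩

end Ker

end IsBimoduleHomAlong

end Bimodule

section Free

variable {K : Type*} [CommRing K] {A : Type*} [Ring A] [Algebra K A]

@[simp]
theorem lmulT_tmul (a x y : A) : lmulT K A a (x ⊗ₜ[K] y) = (a * x) ⊗ₜ y := rfl

@[simp]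
theorem rmulT_tmul (b x y : A) : rmulT K A b (x ⊗ₜ[K] y) = x ⊗ₜ (y * b) := rfl

theorem single_tmul_eq_freeLeft_freeRight {ι : Type*} [DecidableEq ι] (j : ι) (x y : A) :
    Pi.single j (x ⊗ₜ[K] y) = freeLeft K A ι x (freeRight K A ι y (Pi.single j (1 ⊗ₜ 1))) := by
  ext i : 1
  by_cases h : i = j
  · subst h; simp
  · simp [Pi.single_eq_of_ne h]

theorem IsBimoduleHomAlong.ext_free {ι B Y : Type*} [Finite ι] [DecidableEq ι]
    [AddCommGroup Y] [Module K Y] {φ : A → B} {lY rY : B → Y →ₗ[K] Y}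
    {f g : (ι → A ⊗[K] A) →ₗ[K] Y}
    (hf : IsBimoduleHomAlong φ (freeLeft K A ι) (freeRight K A ι) lY rY f)
    (hg : IsBimoduleHomAlong φ (freeLeft K A ι) (freeRight K A ι) lY rY g)
    (h : ∀ j, f (Pi.single j (1 ⊗ₜ 1)) = g (Pi.single j (1 ⊗ₜ 1))) : f = g := by
  refine LinearMap.pi_ext' fun j => TensorProduct.ext' fun x y => ?_
  simp only [LinearMap.comp_apply, LinearMap.coe_single]
  rw [single_tmul_eq_freeLeft_freeRight, hf.map_left, hf.map_right, hg.map_left, hg.map_right, h]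

noncomputable def biAct : (A ⊗[K] A) →ₗ[K] (A ⊗[K] A) →ₗ[K] A ⊗[K] A :=
  TensorProduct.map₂ (LinearMap.mul K A) (LinearMap.mul K A).flip

@[simp]
theorem biAct_tmul (a b x y : A) : biAct (a ⊗ₜ[K] b) (x ⊗ₜ[K] y) = (a * x) ⊗ₜ (y * b) := by
  simp [biAct]

theorem biAct_lmulT (a : A) (z w : A ⊗[K] A) :
    biAct (lmulT K A a z) w = lmulT K A a (biAct z w) := by
  induction z using TensorProduct.induction_on <;>
    induction w using TensorProduct.induction_on <;> simp_all [mul_assoc]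

theorem biAct_rmulT (b : A) (z w : A ⊗[K] A) :
    biAct (rmulT K A b z) w = rmulT K A b (biAct z w) := by
  induction z using TensorProduct.induction_on <;>
    induction w using TensorProduct.induction_on <;> simp_all [mul_assoc]

theorem biAct_one_tmul_one (w : A ⊗[K] A) : biAct (1 ⊗ₜ[K] 1) w = w := by
  induction w using TensorProduct.induction_on <;> simp_all

theorem exists_isBimoduleHomAlong_free {ι ι' : Type*} [Fintype ι] [DecidableEq ι]
    (w : ι → ι' → A ⊗[K] A) :
    ∃ u : (ι → A ⊗[K] A) →ₗ[K] ι' → A ⊗[K] A,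
      IsBimoduleHomAlong id (freeLeft K A ι) (freeRight K A ι) (freeLeft K A ι')
        (freeRight K A ι') u ∧ ∀ j, u (Pi.single j (1 ⊗ₜ 1)) = w j := by
  refine ⟨∑ j, (LinearMap.pi fun i => biAct.flip (w j i)) ∘ₗ LinearMap.proj j,
    ⟨fun a x => ?_, fun b x => ?_⟩, fun j => ?_⟩ <;> ext i
  · simp [biAct_lmulT]
  · simp [biAct_rmulT]
  · simp [Pi.single_apply, apply_ite, ite_apply, biAct_one_tmul_one]

end Free

section TensorSquare

variable {K : Type*} [CommRing K] {A D : Type*} [Ring A] [Algebra K A] [Ring D] [Algebra K D]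

noncomputable def tensorSquare (f : A →ₐ[K] D) : A ⊗[K] A →ₗ[K] D ⊗[K] D :=
  TensorProduct.map f.toLinearMap f.toLinearMap

@[simp]
theorem tensorSquare_tmul (f : A →ₐ[K] D) (x y : A) :
    tensorSquare f (x ⊗ₜ y) = f x ⊗ₜ f y := rfl

theorem tensorSquare_lmulT (f : A →ₐ[K] D) (a : A) (z : A ⊗[K] A) :
    tensorSquare f (lmulT K A a z) = lmulT K D (f a) (tensorSquare f z) := by
  induction z using TensorProduct.induction_on <;> simp_all

theorem tensorSquare_rmulT (f : A →ₐ[K] D) (b : A) (z : A ⊗[K] A) :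
    tensorSquare f (rmulT K A b z) = rmulT K D (f b) (tensorSquare f z) := by
  induction z using TensorProduct.induction_on <;> simp_all

theorem tensorSquare_leftInverse {κ : A →ₐ[K] D} {θ : D →ₐ[K] A} (hκθ : LeftInverse κ θ) :
    LeftInverse (tensorSquare κ) (tensorSquare θ) := fun z => by
  induction z using TensorProduct.induction_on with
  | zero => simp
  | tmul x y => simp [hκθ x, hκθ y]
  | add x y hx hy => simp [hx, hy]

@[simp]
theorem tensorSquare_compLeft_single_one {ι : Type*} [DecidableEq ι] (f : A →ₐ[K] D) (j : ι) :
    (tensorSquare f).compLeft ι (Pi.single j (1 ⊗ₜ 1)) = Pi.single j (1 ⊗ₜ 1) := by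
  ext i : 1
  by_cases h : i = j
  · subst h; simp
  · simp [Pi.single_eq_of_ne h]

theorem isBimoduleHomAlong_tensorSquare (f : A →ₐ[K] D) (ι : Type*) :
    IsBimoduleHomAlong f (freeLeft K A ι) (freeRight K A ι) (freeLeft K D ι) (freeRight K D ι)
      ((tensorSquare f).compLeft ι) :=
  ⟨fun a x => funext fun i => tensorSquare_lmulT f a (x i),
    fun b x => funext fun i => tensorSquare_rmulT f b (x i)⟩

end TensorSquare

theorem AlgHom.isBimoduleHomAlong {K A D : Type*} [CommRing K] [Ring A] [Algebra K A] [Ring D]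
    [Algebra K D] (f : A →ₐ[K] D) :
    IsBimoduleHomAlong f (fun a => mulLeft K a) (fun b => mulRight K b) (fun a => mulLeft K a)
      (fun b => mulRight K b) f.toLinearMap :=
  ⟨fun a x => map_mul f a x, fun b x => map_mul f x b⟩

section BiFP

variable {K : Type*} [CommRing K] {A : Type*} [Ring A] [Algebra K A]
  {X : Type*} [AddCommGroup X] [Module K X] {lX rX : A → X →ₗ[K] X}

theorem isBiFP_zero_iff : IsBiFP K A X lX rX 0 ↔
    ∃ (c : ℕ) (e : (Fin c → A ⊗[K] A) →ₗ[K] X),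
      IsBimoduleHomAlong id (freeLeft K A (Fin c)) (freeRight K A (Fin c)) lX rX e ∧
        Surjective e := by
  constructor
  · rintro ⟨r, -, e, -, -, hl, hr, hs, -⟩
    exact ⟨r 0, e, IsBimoduleHomAlong.iff_comp_eq.2 ⟨hl, hr⟩, hs⟩
  · rintro ⟨c, e, he, hs⟩
    obtain ⟨hl, hr⟩ := IsBimoduleHomAlong.iff_comp_eq.1 he
    exact ⟨fun _ => c, fun _ => 0, e, by simp, by simp, hl, hr, hs, by simp, by simp⟩

theorem isBiFP_succ_iff {n : ℕ} : IsBiFP K A X lX rX (n + 1) ↔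
    ∃ (c : ℕ) (e : (Fin c → A ⊗[K] A) →ₗ[K] X)
      (he : IsBimoduleHomAlong id (freeLeft K A (Fin c)) (freeRight K A (Fin c)) lX rX e),
      Surjective e ∧ IsBiFP K A (ker e) he.kerLeft he.kerRight n := by
  constructor
  · rintro ⟨r, d, e, hdl, hdr, hel, her, hs, hker, hexact⟩
    have he := IsBimoduleHomAlong.iff_comp_eq.2 ⟨hel, her⟩
    have hd0 : ∀ x, d 0 x ∈ ker e := fun x => hker n.succ_pos ▸ mem_range_self _ x
    obtain ⟨hl, hr⟩ := IsBimoduleHomAlong.iff_comp_eq.1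
      (he.codRestrict_ker (IsBimoduleHomAlong.iff_comp_eq.2 ⟨hdl 0, hdr 0⟩) hd0)
    refine ⟨r 0, e, he, hs, fun i => r (i + 1), fun i => d (i + 1), (d 0).codRestrict _ hd0,
      fun i => hdl (i + 1), fun i => hdr (i + 1), hl, hr, fun z => ?_, fun hn => ?_,
      fun i hi => hexact (i + 1) (by omega)⟩
    · obtain ⟨x, hx⟩ : (z : Fin (r 0) → A ⊗[K] A) ∈ range (d 0) := hker n.succ_pos ▸ z.2
      exact ⟨x, Subtype.ext hx⟩
    · rw [ker_codRestrict]
      exact hexact 0 (by omega)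
  · rintro ⟨c, e, he, hs, r, d, e', hdl, hdr, hel, her, hs', hker, hexact⟩
    obtain ⟨hl, hr⟩ := IsBimoduleHomAlong.iff_comp_eq.1
      (he.subtype_ker.comp (IsBimoduleHomAlong.iff_comp_eq.2 ⟨hel, her⟩))
    obtain ⟨hel, her⟩ := IsBimoduleHomAlong.iff_comp_eq.1 he
    refine ⟨fun | 0 => c | i + 1 => r i, fun | 0 => (ker e).subtype ∘ₗ e' | i + 1 => d i, e,
      fun | 0 => hl | i + 1 => hdl i, fun | 0 => hr | i + 1 => hdr i, hel, her, hs,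
      fun _ => ?_, fun | 0, hn => ?_ | i + 1, hi => hexact i (by omega)⟩
    · rw [range_comp, range_eq_top.2 hs', Submodule.map_top, Submodule.range_subtype]
    · rw [ker_comp_of_ker_eq_bot _ (Submodule.ker_subtype _)]
      exact hker (by omega)

theorem isBiFP_free (c n : ℕ) :
    IsBiFP K A (Fin c → A ⊗[K] A) (freeLeft K A (Fin c)) (freeRight K A (Fin c)) n :=
  ⟨fun | 0 => c | _ + 1 => 0, fun _ => 0, LinearMap.id, by simp, by simp, by simp, by simp,
    surjective_id, fun _ => by simp, fun _ _ => Subsingleton.elim _ _⟩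

end BiFP

def finAddPiEquiv (K M : Type*) [CommRing K] [AddCommGroup M] [Module K M] (c c' : ℕ) :
    (Fin (c + c') → M) ≃ₗ[K] (Fin c → M) × (Fin c' → M) :=
  (LinearEquiv.funCongrLeft K M finSumFinEquiv).trans
    (LinearEquiv.sumPiEquivProdPi K (Fin c) (Fin c') fun _ => M)

section Prod

variable {K : Type*} [CommRing K]

theorem isBimoduleHomAlong_finAddPiEquiv {A : Type*} [Ring A] [Algebra K A] (c c' : ℕ) :
    IsBimoduleHomAlong id (freeLeft K A (Fin (c + c'))) (freeRight K A (Fin (c + c')))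
      (fun a => (freeLeft K A (Fin c) a).prodMap (freeLeft K A (Fin c') a))
      (fun b => (freeRight K A (Fin c) b).prodMap (freeRight K A (Fin c') b))
      (finAddPiEquiv K (A ⊗[K] A) c c').toLinearMap :=
  ⟨fun _ _ => rfl, fun _ _ => rfl⟩

theorem ker_comp_equiv_eq_range {M M' N N' Z : Type*} [AddCommGroup M] [Module K M]
    [AddCommGroup M'] [Module K M'] [AddCommGroup N] [Module K N] [AddCommGroup N']
    [Module K N'] [AddCommGroup Z] [Module K Z] {f : M →ₗ[K] Z} {g : M' →ₗ[K] M}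
    (h : ker f = range g) (σ : N ≃ₗ[K] M) (τ : N' ≃ₗ[K] M') :
    ker (f ∘ₗ σ.toLinearMap) = range (σ.symm.toLinearMap ∘ₗ g ∘ₗ τ.toLinearMap) := by
  rw [ker_comp, h, range_comp, range_comp, LinearEquiv.range, Submodule.map_top,
    Submodule.map_equiv_eq_comap_symm, LinearEquiv.symm_symm]

theorem ker_prodMap_eq_range {M M' N N' Y Z : Type*} [AddCommGroup M] [Module K M]
    [AddCommGroup M'] [Module K M'] [AddCommGroup N] [Module K N] [AddCommGroup N']
    [Module K N'] [AddCommGroup Y] [Module K Y] [AddCommGroup Z] [Module K Z]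
    {f : M →ₗ[K] Y} {g : M' →ₗ[K] M} {f' : N →ₗ[K] Z} {g' : N' →ₗ[K] N}
    (h : ker f = range g) (h' : ker f' = range g') :
    ker (f.prodMap f') = range (g.prodMap g') := by
  rw [ker_prodMap, range_prodMap, h, h']

theorem IsBiFP.prod {A M N : Type*} [Ring A] [Algebra K A] [AddCommGroup M] [Module K M]
    [AddCommGroup N] [Module K N] {lM rM : A → M →ₗ[K] M} {lN rN : A → N →ₗ[K] N} {n : ℕ}
    (hM : IsBiFP K A M lM rM n) (hN : IsBiFP K A N lN rN n) :
    IsBiFP K A (M × N) (fun a => (lM a).prodMap (lN a)) (fun b => (rM b).prodMap (rN b)) n := by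
  obtain ⟨r, d, e, hdl, hdr, hel, her, hs, hker, hexact⟩ := hM
  obtain ⟨r', d', e', hdl', hdr', hel', her', hs', hker', hexact'⟩ := hN
  let σ i := finAddPiEquiv K (A ⊗[K] A) (r i) (r' i)
  have hσ i := isBimoduleHomAlong_finAddPiEquiv (K := K) (A := A) (r i) (r' i)
  have hd i := ((hσ i).symm.comp (((IsBimoduleHomAlong.iff_comp_eq.2 ⟨hdl i, hdr i⟩).prodMap
    (IsBimoduleHomAlong.iff_comp_eq.2 ⟨hdl' i, hdr' i⟩)).comp (hσ (i + 1))))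
  have he := ((IsBimoduleHomAlong.iff_comp_eq.2 ⟨hel, her⟩).prodMap
    (IsBimoduleHomAlong.iff_comp_eq.2 ⟨hel', her'⟩)).comp (hσ 0)
  refine ⟨fun i => r i + r' i,
    fun i => (σ i).symm.toLinearMap ∘ₗ (d i).prodMap (d' i) ∘ₗ (σ (i + 1)).toLinearMap,
    e.prodMap e' ∘ₗ (σ 0).toLinearMap, fun i => (IsBimoduleHomAlong.iff_comp_eq.1 (hd i)).1,
    fun i => (IsBimoduleHomAlong.iff_comp_eq.1 (hd i)).2, (IsBimoduleHomAlong.iff_comp_eq.1 he).1,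
    (IsBimoduleHomAlong.iff_comp_eq.1 he).2, (hs.prodMap hs').comp (σ 0).surjective,
    fun hn => ker_comp_equiv_eq_range (ker_prodMap_eq_range (hker hn) (hker' hn)) _ _,
    fun i hi => ?_⟩
  rw [LinearEquiv.ker_comp]
  exact ker_comp_equiv_eq_range (ker_prodMap_eq_range (hexact i hi) (hexact' i hi)) _ _

end Prod

section Retract

variable {K : Type*} [CommRing K]

def IsBimoduleRetract {A D X W : Type*} [AddCommGroup X] [Module K X] [AddCommGroup W]
    [Module K W] (κ : A → D) (θ : D → A) (lX rX : A → X →ₗ[K] X) (lW rW : D → W →ₗ[K] W) :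
    Prop :=
  ∃ (p : X →ₗ[K] W) (s : W →ₗ[K] X), IsBimoduleHomAlong κ lX rX lW rW p ∧
    IsBimoduleHomAlong θ lW rW lX rX s ∧ LeftInverse p s

/-- The kernel of `η` is a retract of `ker e × P` via `v ↦ (u (t v), t v)` and
`(z, y) ↦ k (z + y - u y)`. -/
theorem isBimoduleRetract_ker_prod {A D P Q X W : Type*} [AddCommGroup P] [Module K P]
    [AddCommGroup Q] [Module K Q] [AddCommGroup X] [Module K X] [AddCommGroup W] [Module K W]
    {κ : A → D} {θ : D → A} {lP rP : A → P →ₗ[K] P} {lQ rQ : D → Q →ₗ[K] Q}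
    {lX rX : A → X →ₗ[K] X} {lW rW : D → W →ₗ[K] W}
    {e : P →ₗ[K] X} (he : IsBimoduleHomAlong id lP rP lX rX e)
    {η : Q →ₗ[K] W} (hη : IsBimoduleHomAlong id lQ rQ lW rW η)
    {k : P →ₗ[K] Q} (hk : IsBimoduleHomAlong κ lP rP lQ rQ k)
    {t : Q →ₗ[K] P} (ht : IsBimoduleHomAlong θ lQ rQ lP rP t)
    {u : P →ₗ[K] P} (hu : IsBimoduleHomAlong id lP rP lP rP u) (p : X →ₗ[K] W) (s : W →ₗ[K] X)
    (hkt : LeftInverse k t) (hηk : ∀ x, η (k x) = p (e x)) (hpeu : ∀ x, p (e (u x)) = p (e x))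
    (heut : ∀ q, e (u (t q)) = s (η q)) :
    IsBimoduleRetract κ θ (fun a => (he.kerLeft a).prodMap (lP a))
      (fun b => (he.kerRight b).prodMap (rP b)) hη.kerLeft hη.kerRight := by
  have hs' : ∀ v : ker η, u (t v) ∈ ker e := fun v => by
    rw [mem_ker, heut, mem_ker.1 v.2, map_zero]
  have hp' : ∀ x, (k ∘ₗ (ker e).subtype.coprod (LinearMap.id - u)) x ∈ ker η := fun x => by
    simp [hηk, hpeu, mem_ker.1 x.1.2]
  refine ⟨(k ∘ₗ ((ker e).subtype.coprod (LinearMap.id - u))).codRestrict (ker η) hp',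
    ((u ∘ₗ t ∘ₗ (ker η).subtype).codRestrict (ker e) hs').prod (t ∘ₗ (ker η).subtype),
    ⟨fun a x => Subtype.ext ?_, fun b x => Subtype.ext ?_⟩,
    ⟨fun d v => Prod.ext (Subtype.ext ?_) ?_, fun d v => Prod.ext (Subtype.ext ?_) ?_⟩,
    fun v => Subtype.ext ?_⟩
  · simp [hu.map_left, ← hk.map_left, IsBimoduleHomAlong.kerLeft, LinearMap.codRestrict]
  · simp [hu.map_right, ← hk.map_right, IsBimoduleHomAlong.kerRight, LinearMap.codRestrict]
  · simp [ht.map_left, hu.map_left, IsBimoduleHomAlong.kerLeft, LinearMap.codRestrict]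
  · simp [ht.map_left, IsBimoduleHomAlong.kerLeft, LinearMap.codRestrict]
  · simp [ht.map_right, hu.map_right, IsBimoduleHomAlong.kerRight, LinearMap.codRestrict]
  · simp [ht.map_right, IsBimoduleHomAlong.kerRight, LinearMap.codRestrict]
  · simp [LinearMap.codRestrict, hkt v]

theorem IsBimoduleRetract.exists_presentation {A D : Type*} [Ring A] [Algebra K A] [Ring D]
    [Algebra K D] {κ : A →ₐ[K] D} {θ : D →ₐ[K] A} (hκθ : LeftInverse κ θ)
    {X W : Type*} [AddCommGroup X] [Module K X] [AddCommGroup W] [Module K W]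
    {lX rX : A → X →ₗ[K] X} {lW rW : D → W →ₗ[K] W} (hR : IsBimoduleRetract κ θ lX rX lW rW)
    {c : ℕ} {e : (Fin c → A ⊗[K] A) →ₗ[K] X}
    (he : IsBimoduleHomAlong id (freeLeft K A (Fin c)) (freeRight K A (Fin c)) lX rX e)
    (he_surj : Surjective e) :
    ∃ (η : (Fin c → D ⊗[K] D) →ₗ[K] W)
      (hη : IsBimoduleHomAlong id (freeLeft K D (Fin c)) (freeRight K D (Fin c)) lW rW η),
      Surjective η ∧
        IsBimoduleRetract κ θ (fun a => (he.kerLeft a).prodMap (freeLeft K A (Fin c) a))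
          (fun b => (he.kerRight b).prodMap (freeRight K A (Fin c) b)) hη.kerLeft hη.kerRight := by
  obtain ⟨p, s, hp, hs, hps⟩ := hR
  set k := (tensorSquare κ).compLeft (Fin c)
  set t := (tensorSquare θ).compLeft (Fin c)
  have hk := isBimoduleHomAlong_tensorSquare κ (Fin c)
  have ht := isBimoduleHomAlong_tensorSquare θ (Fin c)
  have hη : IsBimoduleHomAlong id (freeLeft K D (Fin c)) (freeRight K D (Fin c)) lW rW
      (p ∘ₗ e ∘ₗ t) := by
    rw [← show (κ ∘ id ∘ θ : D → D) = id from funext hκθ]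
    exact hp.comp (he.comp ht)
  choose w hw using fun j => he_surj (s (p (e (Pi.single j (1 ⊗ₜ 1)))))
  obtain ⟨u, hu, hu_gen⟩ := exists_isBimoduleHomAlong_free w
  have hηk : (p ∘ₗ e ∘ₗ t) ∘ₗ k = p ∘ₗ e :=
    (hη.comp hk).ext_free (hp.comp he) fun j => by simp [t]
  have hpeu : p ∘ₗ e ∘ₗ u = p ∘ₗ e :=
    (hp.comp (he.comp hu)).ext_free (hp.comp he) fun j => by simp [hu_gen, hw, hps _]
  have heut : e ∘ₗ u ∘ₗ t = s ∘ₗ p ∘ₗ e ∘ₗ t :=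
    (he.comp (hu.comp ht)).ext_free (hs.comp hη) fun j => by simp [t, hu_gen, hw]
  refine ⟨p ∘ₗ e ∘ₗ t, hη, fun x => ?_, isBimoduleRetract_ker_prod he hη hk ht hu p s
    (fun v => funext fun i => tensorSquare_leftInverse hκθ (v i)) (LinearMap.congr_fun hηk)
    (LinearMap.congr_fun hpeu) (LinearMap.congr_fun heut)⟩
  obtain ⟨y, hy⟩ := he_surj (s x)
  exact ⟨k y, by rw [← LinearMap.comp_apply, hηk, LinearMap.comp_apply, hy, hps]⟩

end Retract

theorem IsBiFP.of_isBimoduleRetract {K : Type*} [CommRing K] {A : Type u} {D : Type v} [Ring A]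
    [Algebra K A] [Ring D] [Algebra K D] {κ : A →ₐ[K] D} {θ : D →ₐ[K] A}
    (hκθ : LeftInverse κ θ) {n : ℕ} {X : Type u} [AddCommGroup X] [Module K X]
    {lX rX : A → X →ₗ[K] X} {W : Type v} [AddCommGroup W] [Module K W]
    {lW rW : D → W →ₗ[K] W} (hX : IsBiFP K A X lX rX n)
    (hR : IsBimoduleRetract κ θ lX rX lW rW) : IsBiFP K D W lW rW n := by
  induction n generalizing X W with
  | zero =>
    obtain ⟨c, e, he, he_surj⟩ := isBiFP_zero_iff.1 hX
    obtain ⟨η, hη, hη_surj, -⟩ := hR.exists_presentation hκθ he he_surj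
    exact isBiFP_zero_iff.2 ⟨c, η, hη, hη_surj⟩
  | succ n ih =>
    obtain ⟨c, e, he, he_surj, hker⟩ := isBiFP_succ_iff.1 hX
    obtain ⟨η, hη, hη_surj, hR'⟩ := hR.exists_presentation hκθ he he_surj
    exact isBiFP_succ_iff.2 ⟨c, η, hη, hη_surj, ih (hker.prod (isBiFP_free c n)) hR'⟩

/-- If the `K`-algebra `D` is a retract of the `K`-algebra `A` (via
`κ : A →ₐ[K] D`, `θ : D →ₐ[K] A` with `κ ∘ θ = id`) and `A` is of type bi-`FP n`, then `D`
is of type bi-`FP n`. -/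
theorem algebra_retract_biFP
    (K : Type*) [CommRing K] (A D : Type*) [Ring A] [Algebra K A] [Ring D] [Algebra K D]
    (n : ℕ) (κ : A →ₐ[K] D) (θ : D →ₐ[K] A) (hκθ : κ.comp θ = AlgHom.id K D)
    (h : BiFP K A n) :
    BiFP K D n :=
  IsBiFP.of_isBimoduleRetract (fun d => AlgHom.congr_fun hκθ d) h
    ⟨κ.toLinearMap, θ.toLinearMap, κ.isBimoduleHomAlong, θ.isBimoduleHomAlong,
      fun d => AlgHom.congr_fun hκθ d⟩
end

section
/- Let K be a principal ideal domain, A a K-algebra which is flat as a K-module, with augmentation ε: A → K, and n ≥ 0. If A is of type left-FP_n and of type right-FP_n, then A is of type weak bi-FP_n. -/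
open Function LinearMap TensorProduct MulOpposite

/-! Tensor a free left resolution `P • → K` with a free right resolution `Q • → K` over `K`:
`Pᵢ ⊗[K] Qⱼ` is a finitely generated free `(A,A)`-bimodule, and the total complex of this double
complex, augmented by the product of the two augmentations, is the required bimodule resolution
of `K`.
Exactness is a staircase chase: since every `Qⱼ` is flat over `K`, the rows `P • ⊗ Qⱼ → Qⱼ` stay
exact, so a cycle of the total complex can be corrected column by column, starting from the
augmentation column `Q •`, whose exactness handles the first step. -/

/-- `0 ← M ←e P 0 ←(d 0) P 1 ← ⋯ ← P n` is exact. -/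
structure ExactUpTo (n : ℕ) {P : ℕ → Type*} [∀ i, Zero (P i)] {M : Type*} [Zero M]
    (e : P 0 → M) (d : ∀ i, P (i + 1) → P i) : Prop where
  surjective : Surjective e
  exact_zero : 0 < n → Exact (d 0) e
  exact_succ : ∀ i, i + 1 < n → Exact (d (i + 1)) (d i)

abbrev TotIdx (m : ℕ) : Type := {p : ℕ × ℕ // p.1 + p.2 = m}

instance (m : ℕ) : Fintype (TotIdx m) :=
  Fintype.subtype (Finset.HasAntidiagonal.antidiagonal m) fun _ =>
    Finset.HasAntidiagonal.mem_antidiagonal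

abbrev Tot (C : ℕ → ℕ → Type*) (m : ℕ) : Type _ := ∀ p : TotIdx m, C p.1.1 p.1.2

section TotalComplex

variable {K : Type*} [CommRing K] {C : ℕ → ℕ → Type*} [∀ i j, AddCommGroup (C i j)]
  [∀ i j, Module K (C i j)] (dh : ∀ i j, C (i + 1) j →ₗ[K] C i j)
  (dv : ∀ i j, C i (j + 1) →ₗ[K] C i j)

noncomputable def totD (m : ℕ) : Tot C (m + 1) →ₗ[K] Tot C m :=
  LinearMap.pi fun p =>
    dh p.1.1 p.1.2 ∘ₗ proj (⟨(p.1.1 + 1, p.1.2), by have := p.2; omega⟩ : TotIdx (m + 1)) +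
      (-1 : ℤ) ^ p.1.1 •
        (dv p.1.1 p.1.2 ∘ₗ proj (⟨(p.1.1, p.1.2 + 1), by have := p.2; omega⟩ : TotIdx (m + 1)))

theorem totD_apply {m : ℕ} (w : Tot C (m + 1)) (i j : ℕ) (h : i + j = m) :
    totD dh dv m w ⟨(i, j), h⟩ =
      dh i j (w ⟨(i + 1, j), by omega⟩) + (-1 : ℤ) ^ i • dv i j (w ⟨(i, j + 1), by omega⟩) :=
  rfl

theorem totD_apply_update_of_ne {m : ℕ} (w : Tot C (m + 1)) {a b : ℕ} (hab : a + b = m + 1)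
    (c : C a b) {i j : ℕ} (h : i + j = m) (hh : (a, b) ≠ (i + 1, j))
    (hv : (a, b) ≠ (i, j + 1)) :
    totD dh dv m (update w ⟨(a, b), hab⟩ c) ⟨(i, j), h⟩ = totD dh dv m w ⟨(i, j), h⟩ := by
  rw [totD_apply, totD_apply, update_of_ne, update_of_ne] <;>
    first | exact fun h' => hh (congrArg Subtype.val h').symm
          | exact fun h' => hv (congrArg Subtype.val h').symm

theorem totD_totD {m : ℕ} (hh : ∀ i j, i + j = m → ∀ x, dh i j (dh (i + 1) j x) = 0)
    (hv : ∀ i j, i + j = m → ∀ x, dv i j (dv i (j + 1) x) = 0)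
    (hcomm : ∀ i j x, dh i j (dv (i + 1) j x) = dv i j (dh i (j + 1) x))
    (w : Tot C (m + 2)) : totD dh dv m (totD dh dv (m + 1) w) = 0 := by
  funext ⟨⟨i, j⟩, h⟩
  simp only [totD_apply, map_add, map_zsmul, map_neg, hh i j h, hv i j h, hcomm, pow_succ,
    mul_neg_one, neg_smul, smul_zero, zero_add, add_zero, neg_add_cancel, Pi.zero_apply]

noncomputable def totMap (χ : ∀ i j, C i j →ₗ[K] C i j) (m : ℕ) : Tot C m →ₗ[K] Tot C m :=
  LinearMap.pi fun p => χ p.1.1 p.1.2 ∘ₗ proj p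

theorem totD_totMap {χ : ∀ i j, C i j →ₗ[K] C i j}
    (hh : ∀ i j x, dh i j (χ (i + 1) j x) = χ i j (dh i j x))
    (hv : ∀ i j x, dv i j (χ i (j + 1) x) = χ i j (dv i j x)) {m : ℕ} (z : Tot C (m + 1)) :
    totD dh dv m (totMap χ (m + 1) z) = totMap χ m (totD dh dv m z) := by
  funext ⟨(i, j), h⟩
  simp only [totMap, pi_apply, LinearMap.comp_apply, proj_apply, totD_apply, hh, hv, map_add,
    map_zsmul]

end TotalComplex

section Staircase

variable {K : Type*} [CommRing K] {C : ℕ → ℕ → Type*} [∀ i j, AddCommGroup (C i j)]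
  [∀ i j, Module K (C i j)] {dh : ∀ i j, C (i + 1) j →ₗ[K] C i j}
  {dv : ∀ i j, C i (j + 1) →ₗ[K] C i j}
  {Q : ℕ → Type*} [∀ j, AddCommGroup (Q j)] [∀ j, Module K (Q j)]
  {q : ∀ j, Q (j + 1) →ₗ[K] Q j} {η : ∀ j, C 0 j →ₗ[K] Q j}
  {N : Type*} [AddCommGroup N] [Module K N]

theorem exists_dh_add_dv_eq {j : ℕ} {g : Q j →ₗ[K] N} (hg : Exact (q j) g)
    (hη : Exact (dh 0 j) (η j)) (hηsurj : Surjective (η (j + 1)))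
    (hηdv : ∀ x, η j (dv 0 j x) = q j (η (j + 1) x)) {y : C 0 j} (hy : g (η j y) = 0) :
    ∃ c w, dh 0 j c + dv 0 j w = y := by
  obtain ⟨v, hv⟩ := (hg _).mp hy
  obtain ⟨w, rfl⟩ := hηsurj v
  obtain ⟨c, hc⟩ := (hη (y - dv 0 j w)).mp (by rw [map_sub, hηdv, hv, sub_self])
  exact ⟨c, w, by rw [hc, sub_add_cancel]⟩

def EqOnColumnsBelow {m : ℕ} (k : ℕ) (x y : Tot C m) : Prop :=
  ∀ i j (h : i + j = m), i < k → x ⟨(i, j), h⟩ = y ⟨(i, j), h⟩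

theorem exists_totD_eqOnColumnsBelow_one {m : ℕ} (hq : Exact (q (m + 1)) (q m))
    (hη : ∀ j, Exact (dh 0 j) (η j)) (hηsurj : Surjective (η (m + 2)))
    (hηdv : ∀ j x, η j (dv 0 j x) = q j (η (j + 1) x))
    {z : Tot C (m + 1)} (hz : totD dh dv m z = 0) :
    ∃ w, EqOnColumnsBelow 1 (totD dh dv (m + 1) w) z := by
  have hcycle := congrFun hz ⟨(0, m), zero_add m⟩
  rw [totD_apply, pow_zero, one_smul, Pi.zero_apply, add_eq_zero_iff_neg_eq] at hcycle
  have hy : q m (η (m + 1) (z ⟨(0, m + 1), by omega⟩)) = 0 := by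
    rw [← hηdv, ← hcycle, map_neg, (hη m).apply_apply_eq_zero, neg_zero]
  obtain ⟨c, w, hcw⟩ := exists_dh_add_dv_eq hq (hη _) hηsurj (hηdv _) hy
  refine ⟨update (update 0 ⟨(0, m + 2), by omega⟩ w) ⟨(1, m + 1), by omega⟩ c, ?_⟩
  rintro i j h hi
  obtain rfl : i = 0 := by omega
  obtain rfl : j = m + 1 := by omega
  rw [totD_apply, update_self, update_of_ne (by simp), update_self, pow_zero, one_smul, hcw]

theorem exists_totD_eqOnColumnsBelow_succ {m k j : ℕ} (hkj : k + j = m)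
    (hrow : Exact (dh (k + 1) j) (dh k j)) (hv : ∀ x, dv k j (dv k (j + 1) x) = 0)
    (hcomm : ∀ x, dh k j (dv (k + 1) j x) = dv k j (dh k (j + 1) x))
    {z : Tot C (m + 1)} (hz : totD dh dv m z = 0) {w : Tot C (m + 2)}
    (hw : EqOnColumnsBelow (k + 1) (totD dh dv (m + 1) w) z) :
    ∃ w', EqOnColumnsBelow (k + 2) (totD dh dv (m + 1) w') z := by
  set y := z ⟨(k + 1, j), by omega⟩ -
    (-1 : ℤ) ^ (k + 1) • dv (k + 1) j (w ⟨(k + 1, j + 1), by omega⟩)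
  have hcycle := congrFun hz ⟨(k, j), hkj⟩
  rw [totD_apply, Pi.zero_apply] at hcycle
  have hwk := hw k (j + 1) (by omega) (by omega)
  rw [totD_apply, ← eq_sub_iff_add_eq] at hwk
  have hy : dh k j y = 0 := by
    rw [map_sub, map_zsmul, hcomm, hwk, map_sub, map_zsmul, hv, smul_zero, sub_zero, pow_succ,
      mul_neg_one, neg_smul, sub_neg_eq_add, hcycle]
  obtain ⟨c, hc⟩ := (hrow y).mp hy
  refine ⟨update w ⟨(k + 2, j), by omega⟩ c, fun i j' h hi => ?_⟩
  rcases Nat.lt_or_ge i (k + 1) with hi | hi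
  · exact (totD_apply_update_of_ne dh dv w _ c h (by simp only [ne_eq, Prod.mk.injEq]; omega)
      (by simp only [ne_eq, Prod.mk.injEq]; omega)).trans (hw i j' h hi)
  · obtain rfl : i = k + 1 := by omega
    obtain rfl : j' = j := by omega
    rw [totD_apply, update_self, update_of_ne (by simp), hc, sub_add_cancel]

theorem exact_totD {m : ℕ} (hrow : ∀ i j, i + j = m → Exact (dh (i + 1) j) (dh i j))
    (hv : ∀ i j, i + j = m → ∀ x, dv i j (dv i (j + 1) x) = 0)
    (hcomm : ∀ i j x, dh i j (dv (i + 1) j x) = dv i j (dh i (j + 1) x))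
    (hη : ∀ j, Exact (dh 0 j) (η j)) (hηsurj : Surjective (η (m + 2)))
    (hηdv : ∀ j x, η j (dv 0 j x) = q j (η (j + 1) x)) (hq : Exact (q (m + 1)) (q m)) :
    Exact (totD dh dv (m + 1)) (totD dh dv m) := by
  intro z
  constructor
  · intro hz
    have hstairs : ∀ k ≤ m + 1, ∃ w, EqOnColumnsBelow (k + 1) (totD dh dv (m + 1) w) z := by
      intro k hk
      induction k with
      | zero => exact exists_totD_eqOnColumnsBelow_one hq hη hηsurj hηdv hz
      | succ k ih =>
        obtain ⟨w, hw⟩ := ih (by omega)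
        exact exists_totD_eqOnColumnsBelow_succ (j := m - k) (by omega) (hrow _ _ (by omega))
          (hv _ _ (by omega)) (hcomm _ _) hz hw
    obtain ⟨w, hw⟩ := hstairs (m + 1) le_rfl
    exact ⟨w, funext fun ⟨(i, j), h⟩ => hw i j h (by omega)⟩
  · rintro ⟨w, rfl⟩
    exact totD_totD dh dv (fun i j h => (hrow i j h).apply_apply_eq_zero) hv hcomm w

theorem exact_totD_zero {g : Q 0 →ₗ[K] N} (hg : Exact (q 0) g) (hη : Exact (dh 0 0) (η 0))
    (hηsurj : Surjective (η 1)) (hηdv : ∀ x, η 0 (dv 0 0 x) = q 0 (η 1 x)) :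
    Exact (totD dh dv 0) (g ∘ₗ η 0 ∘ₗ proj (⟨(0, 0), rfl⟩ : TotIdx 0)) := by
  intro z
  constructor
  · intro hz
    obtain ⟨c, w, hcw⟩ := exists_dh_add_dv_eq hg hη hηsurj hηdv hz
    refine ⟨update (update 0 ⟨(0, 1), rfl⟩ w) ⟨(1, 0), rfl⟩ c, funext fun ⟨(i, j), h⟩ => ?_⟩
    obtain ⟨rfl, rfl⟩ : i = 0 ∧ j = 0 := by omega
    rw [totD_apply, update_self, update_of_ne (by simp), update_self, pow_zero, one_smul, hcw]
    rfl
  · rintro ⟨w, rfl⟩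
    change g (η 0 (totD dh dv 0 w ⟨(0, 0), rfl⟩)) = 0
    rw [totD_apply, pow_zero, one_smul, map_add, hη.apply_apply_eq_zero, hηdv, zero_add,
      hg.apply_apply_eq_zero]

end Staircase

section TensorResolution

variable {K : Type*} [CommRing K] {P Q : ℕ → Type*} [∀ i, AddCommGroup (P i)]
  [∀ i, Module K (P i)] [∀ j, AddCommGroup (Q j)] [∀ j, Module K (Q j)]
  (dP : ∀ i, P (i + 1) →ₗ[K] P i) (dQ : ∀ j, Q (j + 1) →ₗ[K] Q j)
  (eP : P 0 →ₗ[K] K) (eQ : Q 0 →ₗ[K] K)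

noncomputable def tensorTotD (m : ℕ) :
    Tot (fun i j => P i ⊗[K] Q j) (m + 1) →ₗ[K] Tot (fun i j => P i ⊗[K] Q j) m :=
  totD (fun i j => rTensor (Q j) (dP i)) (fun i j => lTensor (P i) (dQ j)) m

noncomputable def augTensor (j : ℕ) : P 0 ⊗[K] Q j →ₗ[K] Q j :=
  (TensorProduct.lid K (Q j)).toLinearMap ∘ₗ rTensor (Q j) eP

noncomputable def tensorTotAug : Tot (fun i j => P i ⊗[K] Q j) 0 →ₗ[K] K :=
  eQ ∘ₗ augTensor eP 0 ∘ₗ proj (⟨(0, 0), rfl⟩ : TotIdx 0)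

theorem augTensor_lTensor {j : ℕ} (x : P 0 ⊗[K] Q (j + 1)) :
    augTensor eP j (lTensor (P 0) (dQ j) x) = dQ j (augTensor eP (j + 1) x) := by
  induction x using TensorProduct.induction_on with
  | zero => simp
  | tmul x y => simp [augTensor]
  | add x y hx hy => simp only [map_add, hx, hy]

theorem exactUpTo_tensorTot [∀ j, Module.Flat K (Q j)] {n : ℕ}
    (hP : ExactUpTo n eP fun i => dP i) (hQ : ExactUpTo n eQ fun j => dQ j) :
    ExactUpTo n (tensorTotAug eP eQ) fun m => tensorTotD dP dQ m := by
  have hη (hn : 0 < n) (j : ℕ) : Exact (rTensor (Q j) (dP 0)) (augTensor eP j) :=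
    (Module.Flat.rTensor_exact _ (hP.exact_zero hn)).comp_injective _
      (TensorProduct.lid K (Q j)).injective (map_zero _)
  have hηsurj (j : ℕ) : Surjective (augTensor eP j) :=
    (TensorProduct.lid K (Q j)).surjective.comp (rTensor_surjective _ hP.surjective)
  have hcomm (i j : ℕ) (x : P (i + 1) ⊗[K] Q (j + 1)) :
      rTensor (Q j) (dP i) (lTensor (P (i + 1)) (dQ j) x) =
        lTensor (P i) (dQ j) (rTensor (Q (j + 1)) (dP i) x) := by
    rw [← LinearMap.comp_apply, rTensor_comp_lTensor, ← lTensor_comp_rTensor,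
      LinearMap.comp_apply]
  refine ⟨?_, fun hn => ?_, fun m hm => ?_⟩
  · intro c
    obtain ⟨y, hy⟩ := (hQ.surjective.comp (hηsurj 0)) c
    exact ⟨update 0 ⟨(0, 0), rfl⟩ y, by simpa [tensorTotAug] using hy⟩
  · exact exact_totD_zero (hQ.exact_zero hn) (hη hn 0) (hηsurj 1) (augTensor_lTensor dQ eP)
  · refine exact_totD (fun i j h => Module.Flat.rTensor_exact _ (hP.exact_succ i (by omega)))
      (fun i j h x => ?_) hcomm (hη (by omega)) (hηsurj _) (fun j => augTensor_lTensor dQ eP)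
      (hQ.exact_succ m hm)
    rw [← LinearMap.comp_apply, ← lTensor_comp,
      (hQ.exact_succ j (by omega)).linearMap_comp_eq_zero, lTensor_zero, LinearMap.zero_apply]

variable {dP dQ eP eQ} {φ : ∀ i, P i →ₗ[K] P i} {ψ : ∀ j, Q j →ₗ[K] Q j}

theorem tensorTotD_totMap (hφ : ∀ i, dP i ∘ₗ φ (i + 1) = φ i ∘ₗ dP i)
    (hψ : ∀ j, dQ j ∘ₗ ψ (j + 1) = ψ j ∘ₗ dQ j) {m : ℕ}
    (z : Tot (fun i j => P i ⊗[K] Q j) (m + 1)) :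
    tensorTotD dP dQ m (totMap (fun i j => map (φ i) (ψ j)) (m + 1) z) =
      totMap (fun i j => map (φ i) (ψ j)) m (tensorTotD dP dQ m z) := by
  refine totD_totMap _ _ (fun i j x => ?_) (fun i j x => ?_) z
  · rw [← LinearMap.comp_apply, rTensor_comp_map, hφ, ← map_comp_rTensor, LinearMap.comp_apply]
  · rw [← LinearMap.comp_apply, lTensor_comp_map, hψ, ← map_comp_lTensor, LinearMap.comp_apply]

theorem tensorTotAug_totMap {c c' : K} (hφ : eP ∘ₗ φ 0 = c • eP) (hψ : eQ ∘ₗ ψ 0 = c' • eQ)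
    (z : Tot (fun i j => P i ⊗[K] Q j) 0) :
    tensorTotAug eP eQ (totMap (fun i j => map (φ i) (ψ j)) 0 z) =
      c * c' * tensorTotAug eP eQ z := by
  change (eQ ∘ₗ augTensor eP 0 ∘ₗ map (φ 0) (ψ 0)) _ =
    ((c * c') • (eQ ∘ₗ augTensor eP 0)) _
  congr 1
  ext x y
  have hx := LinearMap.congr_fun hφ x
  have hy := LinearMap.congr_fun hψ y
  simp only [LinearMap.comp_apply, LinearMap.smul_apply] at hx hy
  simp [augTensor, hx, hy]
  ring

end TensorResolution

section FreeBimodule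

variable (K A : Type*) [CommRing K] [Ring A] [Algebra K A]

noncomputable def finTensorEquiv (p q : ℕ) :
    (Fin p → A) ⊗[K] (Fin q → Aᵐᵒᵖ) ≃ₗ[K] (Fin p × Fin q → A ⊗[K] A) :=
  TensorProduct.congr (LinearEquiv.refl K _)
      (LinearEquiv.piCongrRight fun _ => (opLinearEquiv K).symm) ≪≫ₗ
    piLeft K _ _ ≪≫ₗ LinearEquiv.piCongrRight (fun _ => piRight K K _ _) ≪≫ₗ
    (LinearEquiv.curry K (A ⊗[K] A) (Fin p) (Fin q)).symm

variable {K A}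

@[simp]
theorem finTensorEquiv_tmul {p q : ℕ} (x : Fin p → A) (y : Fin q → Aᵐᵒᵖ) (k : Fin p)
    (l : Fin q) :
    finTensorEquiv K A p q (x ⊗ₜ y) (k, l) = x k ⊗ₜ unop (y l) := by
  simp [finTensorEquiv]

theorem finTensorEquiv_comp_rTensor {p q : ℕ} (a : A) :
    (finTensorEquiv K A p q).toLinearMap ∘ₗ rTensor _ ((mulLeft K a).compLeft (Fin p)) =
      (lmulT K A a).compLeft _ ∘ₗ (finTensorEquiv K A p q).toLinearMap := by
  refine TensorProduct.ext' fun x y => funext fun ⟨k, l⟩ => ?_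
  simp [lmulT]

theorem finTensorEquiv_comp_lTensor {p q : ℕ} (b : A) :
    (finTensorEquiv K A p q).toLinearMap ∘ₗ lTensor _ ((mulLeft K (op b)).compLeft (Fin q)) =
      (rmulT K A b).compLeft _ ∘ₗ (finTensorEquiv K A p q).toLinearMap := by
  refine TensorProduct.ext' fun x y => funext fun ⟨k, l⟩ => ?_
  simp [rmulT]

variable (K A) in
noncomputable def totFinEquiv (r s : ℕ → ℕ) (m : ℕ) :
    Tot (fun i j => (Fin (r i) → A) ⊗[K] (Fin (s j) → Aᵐᵒᵖ)) m ≃ₗ[K]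
      ((Σ p : TotIdx m, Fin (r p.1.1) × Fin (s p.1.2)) → A ⊗[K] A) :=
  LinearEquiv.piCongrRight (fun _ => finTensorEquiv K A _ _) ≪≫ₗ
    (LinearEquiv.piCurry K fun _ _ => A ⊗[K] A).symm

variable {r s : ℕ → ℕ} {m : ℕ}

theorem totFinEquiv_totMap_mulLeft (a : A)
    (z : Tot (fun i j => (Fin (r i) → A) ⊗[K] (Fin (s j) → Aᵐᵒᵖ)) m) :
    totFinEquiv K A r s m
        (totMap (fun i _ => map ((mulLeft K a).compLeft (Fin (r i))) LinearMap.id) m z) =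
      (lmulT K A a).compLeft _ (totFinEquiv K A r s m z) :=
  funext fun ⟨p, kl⟩ => congrFun (LinearMap.congr_fun (finTensorEquiv_comp_rTensor a) (z p)) kl

theorem totFinEquiv_totMap_mulLeft_op (b : A)
    (z : Tot (fun i j => (Fin (r i) → A) ⊗[K] (Fin (s j) → Aᵐᵒᵖ)) m) :
    totFinEquiv K A r s m
        (totMap (fun _ j => map LinearMap.id ((mulLeft K (op b)).compLeft (Fin (s j)))) m z) =
      (rmulT K A b).compLeft _ (totFinEquiv K A r s m z) :=
  funext fun ⟨p, kl⟩ => congrFun (LinearMap.congr_fun (finTensorEquiv_comp_lTensor b) (z p)) kl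

end FreeBimodule

section Transport

variable {K : Type*} [CommRing K] {T T' : ℕ → Type*} [∀ m, AddCommGroup (T m)]
  [∀ m, Module K (T m)] [∀ m, AddCommGroup (T' m)] [∀ m, Module K (T' m)]
  {M : Type*} [AddCommGroup M] [Module K M]

theorem ExactUpTo.conj {n : ℕ} {d : ∀ m, T (m + 1) →ₗ[K] T m} {e : T 0 →ₗ[K] M}
    (h : ExactUpTo n e fun m => d m) (Ψ : ∀ m, T m ≃ₗ[K] T' m) :
    ExactUpTo n (e ∘ₗ (Ψ 0).symm.toLinearMap)
      fun m => (Ψ m).toLinearMap ∘ₗ d m ∘ₗ (Ψ (m + 1)).symm.toLinearMap := by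
  have hsq (m : ℕ) : ((Ψ m).toLinearMap ∘ₗ d m ∘ₗ (Ψ (m + 1)).symm.toLinearMap) ∘ₗ
      (Ψ (m + 1)).toLinearMap = (Ψ m).toLinearMap ∘ₗ d m := by
    ext; simp
  refine ⟨h.surjective.comp (Ψ 0).symm.surjective, fun hn => ?_, fun m hm => ?_⟩
  · exact (Function.Exact.iff_of_ladder_linearEquiv (e₃ := LinearEquiv.refl K M) (hsq 0)
      (by ext; simp)).mpr (h.exact_zero hn)
  · exact (Function.Exact.iff_of_ladder_linearEquiv (hsq (m + 1)) (hsq m)).mpr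
      (h.exact_succ m hm)

theorem isBiFP_of_exactUpTo {A : Type*} [Ring A] [Algebra K A] {lact ract : A → M →ₗ[K] M}
    {n : ℕ} {d : ∀ m, T (m + 1) →ₗ[K] T m} {e : T 0 →ₗ[K] M} (h : ExactUpTo n e fun m => d m)
    {L R : A → ∀ m, T m →ₗ[K] T m}
    (hdL : ∀ a m z, d m (L a (m + 1) z) = L a m (d m z))
    (hdR : ∀ b m z, d m (R b (m + 1) z) = R b m (d m z))
    (heL : ∀ a z, e (L a 0 z) = lact a (e z)) (heR : ∀ b z, e (R b 0 z) = ract b (e z))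
    {ι : ℕ → Type*} [∀ m, Fintype (ι m)] (Φ : ∀ m, T m ≃ₗ[K] (ι m → A ⊗[K] A))
    (hΦL : ∀ a m z, Φ m (L a m z) = (lmulT K A a).compLeft (ι m) (Φ m z))
    (hΦR : ∀ b m z, Φ m (R b m z) = (rmulT K A b).compLeft (ι m) (Φ m z)) :
    IsBiFP K A M lact ract n := by
  let Ψ m := Φ m ≪≫ₗ LinearEquiv.funCongrLeft K (A ⊗[K] A) (Fintype.equivFin (ι m)).symm
  have hΨL a m z : Ψ m (L a m z) = (lmulT K A a).compLeft _ (Ψ m z) := by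
    ext
    simp [Ψ, hΦL]
  have hΨR b m z : Ψ m (R b m z) = (rmulT K A b).compLeft _ (Ψ m z) := by
    ext
    simp [Ψ, hΦR]
  have hΨL' a m x : (Ψ m).symm ((lmulT K A a).compLeft _ x) = L a m ((Ψ m).symm x) := by
    rw [LinearEquiv.symm_apply_eq, hΨL, LinearEquiv.apply_symm_apply]
  have hΨR' b m x : (Ψ m).symm ((rmulT K A b).compLeft _ x) = R b m ((Ψ m).symm x) := by
    rw [LinearEquiv.symm_apply_eq, hΨR, LinearEquiv.apply_symm_apply]
  obtain ⟨hs, h0, hsucc⟩ := h.conj Ψ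
  refine ⟨fun m => Fintype.card (ι m),
    fun m => (Ψ m).toLinearMap ∘ₗ d m ∘ₗ (Ψ (m + 1)).symm.toLinearMap,
    e ∘ₗ (Ψ 0).symm.toLinearMap, fun m a => ?_, fun m b => ?_, fun a => ?_, fun b => ?_, hs,
    fun hn => exact_iff.mp (h0 hn), fun m hm => exact_iff.mp (hsucc m hm)⟩
  all_goals refine LinearMap.ext fun x => ?_
  · simp only [LinearMap.comp_apply, LinearEquiv.coe_coe, hΨL', hdL, hΨL]
  · simp only [LinearMap.comp_apply, LinearEquiv.coe_coe, hΨR', hdR, hΨR]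
  · simp only [LinearMap.comp_apply, LinearEquiv.coe_coe, hΨL', heL]
  · simp only [LinearMap.comp_apply, LinearEquiv.coe_coe, hΨR', heR]

end Transport

theorem exists_exactUpTo_of_leftFP {K R : Type*} [CommRing K] [Ring R] [Algebra K R]
    (ε : R →ₐ[K] K) {n : ℕ} (h : LeftFP R ε.toRingHom n) :
    ∃ (r : ℕ → ℕ) (d : ∀ i, (Fin (r (i + 1)) → R) →ₗ[K] (Fin (r i) → R))
      (e : (Fin (r 0) → R) →ₗ[K] K),
      (∀ a i, d i ∘ₗ (mulLeft K a).compLeft _ = (mulLeft K a).compLeft _ ∘ₗ d i) ∧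
      (∀ a, e ∘ₗ (mulLeft K a).compLeft _ = ε a • e) ∧
      ExactUpTo (P := fun i => Fin (r i) → R) n e fun i => d i := by
  let _ : Module R K := Module.compHom K ε.toRingHom
  obtain ⟨r, d, e, hs, h0, hsucc⟩ := h
  have he (a : R) (x : Fin (r 0) → R) : e (a • x) = ε a * e x := e.map_smul a x
  let eK : (Fin (r 0) → R) →ₗ[K] K :=
    { toFun := e
      map_add' := e.map_add
      map_smul' c x := by
        rw [← algebraMap_smul R c x, he, AlgHom.commutes]
        rfl }
  refine ⟨r, fun i => (d i).restrictScalars K, eK, fun a i => LinearMap.ext fun x => ?_,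
    fun a => LinearMap.ext fun x => he a x,
    ⟨hs, fun hn => (exact_iff (f := d 0) (g := e)).mpr (h0 hn),
      fun i hi => (exact_iff (f := d (i + 1)) (g := d i)).mpr (hsucc i hi)⟩⟩
  exact (d i).map_smul a x

instance Module.Flat.pi_of_finite {K M ι : Type*} [CommRing K] [AddCommGroup M] [Module K M]
    [Module.Flat K M] [Finite ι] : Module.Flat K (ι → M) := by
  classical
  have := Fintype.ofFinite ι
  exact of_linearEquiv (DirectSum.linearEquivFunOnFintype K ι fun _ => M).symm

instance Module.Flat.mulOpposite {K A : Type*} [CommRing K] [Ring A] [Algebra K A]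
    [Module.Flat K A] : Module.Flat K Aᵐᵒᵖ :=
  of_linearEquiv (opLinearEquiv K).symm

theorem weakBiFP_of_exactUpTo {K A : Type*} [CommRing K] [Ring A] [Algebra K A]
    [Module.Flat K A]
    {ε : A →ₐ[K] K} {n : ℕ} {r s : ℕ → ℕ}
    {dP : ∀ i, (Fin (r (i + 1)) → A) →ₗ[K] (Fin (r i) → A)} {eP : (Fin (r 0) → A) →ₗ[K] K}
    {dQ : ∀ j, (Fin (s (j + 1)) → Aᵐᵒᵖ) →ₗ[K] (Fin (s j) → Aᵐᵒᵖ)}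
    {eQ : (Fin (s 0) → Aᵐᵒᵖ) →ₗ[K] K}
    (hdP : ∀ a i, dP i ∘ₗ (mulLeft K a).compLeft _ = (mulLeft K a).compLeft _ ∘ₗ dP i)
    (heP : ∀ a, eP ∘ₗ (mulLeft K a).compLeft _ = ε a • eP)
    (hdQ : ∀ b j, dQ j ∘ₗ (mulLeft K (op b)).compLeft _ = (mulLeft K (op b)).compLeft _ ∘ₗ dQ j)
    (heQ : ∀ b, eQ ∘ₗ (mulLeft K (op b)).compLeft _ = ε b • eQ)
    (hP : ExactUpTo (P := fun i => Fin (r i) → A) n eP fun i => dP i)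
    (hQ : ExactUpTo (P := fun j => Fin (s j) → Aᵐᵒᵖ) n eQ fun j => dQ j) :
    WeakBiFP K A ε n := by
  refine isBiFP_of_exactUpTo
    (exactUpTo_tensorTot (P := fun i => Fin (r i) → A) (Q := fun j => Fin (s j) → Aᵐᵒᵖ)
      dP dQ eP eQ hP hQ)
    (L := fun a => totMap fun i _ => map ((mulLeft K a).compLeft (Fin (r i))) LinearMap.id)
    (R := fun b => totMap fun _ j => map LinearMap.id ((mulLeft K (op b)).compLeft (Fin (s j))))
    (fun a _ z => tensorTotD_totMap (hdP a) (fun _ => rfl) z)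
    (fun b _ z => tensorTotD_totMap (fun _ => rfl) (hdQ b) z)
    (fun a z => ?_) (fun b z => ?_) (totFinEquiv K A r s)
    (fun a _ z => totFinEquiv_totMap_mulLeft a z)
    (fun b _ z => totFinEquiv_totMap_mulLeft_op b z)
  · rw [tensorTotAug_totMap (heP a) (c' := 1) (by rw [LinearMap.comp_id, one_smul]), mul_one]
    rfl
  · rw [tensorTotAug_totMap (c := 1) (by rw [LinearMap.comp_id, one_smul]) (heQ b), one_mul]
    rfl

theorem leftFP_and_rightFP_imp_weakBiFP_of_flat_general
    (K : Type*) [CommRing K]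
    (A : Type*) [Ring A] [Algebra K A] (hflat : Module.Flat K A)
    (ε : A →ₐ[K] K) (n : ℕ)
    (hl : LeftFP A ε.toRingHom n) (hr : RightFP A ε.toRingHom n) :
    WeakBiFP K A ε n := by
  obtain ⟨r, dP, eP, hdP, heP, hP⟩ := exists_exactUpTo_of_leftFP ε hl
  obtain ⟨s, dQ, eQ, hdQ, heQ, hQ⟩ :=
    exists_exactUpTo_of_leftFP (ε.fromOpposite fun _ _ => Commute.all _ _) hr
  exact weakBiFP_of_exactUpTo hdP heP (fun b => hdQ (op b)) (fun b => heQ (op b)) hP hQ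

/-- Let `K` be a principal ideal domain and `A` a `K`-algebra which is flat
as a `K`-module, with augmentation `ε`. If `A` is of type left-`FP n` and of type
right-`FP n`, then `A` is of type weak bi-`FP n`. -/
theorem leftFP_and_rightFP_imp_weakBiFP_of_flat
    (K : Type*) [CommRing K] [IsDomain K] [IsPrincipalIdealRing K]
    (A : Type*) [Ring A] [Algebra K A] (hflat : Module.Flat K A)
    (ε : A →ₐ[K] K) (n : ℕ)
    (hl : LeftFP A ε.toRingHom n) (hr : RightFP A ε.toRingHom n) :
    WeakBiFP K A ε n :=
  leftFP_and_rightFP_imp_weakBiFP_of_flat_general K A hflat ε n hl hr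
end
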